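/- arXiv:1501.05380 — 6 statements merged into one kernel-verified Lean document; each statement's English description precedes it below -/
import Mathlib

section
/- Let A, B ∈ SL(2,ℝ) with ‖A‖ > 1 and ‖B‖ > 1, and suppose A = R_{ψ_A} · Λ_{‖A‖} · R_{φ_A} and B = R_{ψ_B} · Λ_{‖B‖} · R_{φ_B} for real numbers φ_A, ψ_A, φ_B, ψ_B. Put θ = φ_B + ψ_A and N = (‖A‖²‖B‖² + ‖A‖⁻²‖B‖⁻²)·cos²θ + (‖A‖²‖B‖⁻² + ‖A‖⁻²‖B‖²)·sin²θ. Then (1/4)·N ≤ ‖BA‖² ≤ N. -/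
open Real

/-- Operator norm of a 2×2 real matrix, acting on Euclidean space. -/
noncomputable def opNorm (A : Matrix (Fin 2) (Fin 2) ℝ) : ℝ :=
  ‖(Matrix.toEuclideanCLM (𝕜 := ℝ) A : EuclideanSpace ℝ (Fin 2) →L[ℝ] EuclideanSpace ℝ (Fin 2))‖

/-- Rotation matrix R_θ. -/
noncomputable def Rmat (θ : ℝ) : Matrix (Fin 2) (Fin 2) ℝ :=
  !![Real.cos θ, -Real.sin θ; Real.sin θ, Real.cos θ]

/-- Diagonal matrix Λ_λ = diag(λ, λ⁻¹). -/
noncomputable def Lmat (lam : ℝ) : Matrix (Fin 2) (Fin 2) ℝ := !![lam, 0; 0, lam⁻¹]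

/-!
Writing `a = ‖A‖`, `b = ‖B‖`, `θ = φB + ψA`, we get `B * A = R_{ψB} * M * R_{φA}` with
`M = Λ_b * R_θ * Λ_a`. Rotations are unitary, so `‖B * A‖ = ‖M‖`, and `N` is exactly the sum of the
squares of the entries of `M`. For an `m × n` matrix this Frobenius sum lies between `‖M‖²` and
`n‖M‖²`, because every column of `M` has length at most `‖M‖`; with `n = 2` this even gives
`N / 2 ≤ ‖B * A‖²`.
-/

open scoped Matrix.Norms.L2Operator

section Frobenius

variable {m n : Type*} [Fintype m] [Fintype n] [DecidableEq n]

theorem Matrix.sq_l2_opNorm_le_sum_sq (M : Matrix m n ℝ) :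
    ‖M‖ ^ 2 ≤ ∑ i, ∑ j, M i j ^ 2 := by
  have hS : 0 ≤ ∑ i, ∑ j, M i j ^ 2 := by positivity
  suffices ‖M‖ ≤ √(∑ i, ∑ j, M i j ^ 2) by
    simpa [Real.sq_sqrt hS] using pow_le_pow_left₀ (norm_nonneg M) this 2
  rw [l2_opNorm_def]
  refine ContinuousLinearMap.opNorm_le_bound _ (Real.sqrt_nonneg _) fun x => ?_
  rw [← Real.sqrt_sq (norm_nonneg x), ← Real.sqrt_mul hS, Real.le_sqrt (norm_nonneg _) (by positivity),
    EuclideanSpace.norm_sq_eq, EuclideanSpace.norm_sq_eq, Finset.sum_mul]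
  refine Finset.sum_le_sum fun i _ => ?_
  simpa [Matrix.mulVec, dotProduct] using Finset.sum_mul_sq_le_sq_mul_sq Finset.univ (M i) x.ofLp

theorem Matrix.sum_sq_col_le_sq_l2_opNorm (M : Matrix m n ℝ) (j : n) :
    ∑ i, M i j ^ 2 ≤ ‖M‖ ^ 2 := by
  have h := l2_opNorm_mulVec M (EuclideanSpace.single j 1)
  rw [PiLp.norm_single, norm_one, mul_one] at h
  have h2 := pow_le_pow_left₀ (norm_nonneg _) h 2
  simpa [EuclideanSpace.norm_sq_eq, Matrix.mulVec_single_one] using h2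

theorem Matrix.sum_sq_le_card_mul_sq_l2_opNorm (M : Matrix m n ℝ) :
    ∑ i, ∑ j, M i j ^ 2 ≤ Fintype.card n * ‖M‖ ^ 2 := by
  rw [Finset.sum_comm]
  have h := Finset.sum_le_card_nsmul Finset.univ _ _ fun j _ => M.sum_sq_col_le_sq_l2_opNorm j
  rwa [Finset.card_univ, nsmul_eq_mul] at h

end Frobenius

theorem opNorm_eq_l2_opNorm (M : Matrix (Fin 2) (Fin 2) ℝ) : opNorm M = ‖M‖ := rfl

theorem Rmat_mul_Rmat (α β : ℝ) : Rmat α * Rmat β = Rmat (α + β) := by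
  ext i j
  fin_cases i <;> fin_cases j <;>
    simp [Rmat, Matrix.mul_apply, Real.cos_add, Real.sin_add] <;> ring

theorem Rmat_mem_unitary (θ : ℝ) : Rmat θ ∈ unitary (Matrix (Fin 2) (Fin 2) ℝ) := by
  rw [← Matrix.unitaryGroup, Matrix.mem_unitaryGroup_iff]
  ext i j
  fin_cases i <;> fin_cases j <;>
    simp [Rmat, Matrix.mul_apply, Matrix.star_eq_conjTranspose, ← sq] <;> ring

theorem l2_opNorm_Rmat_mul_mul_Rmat (α β : ℝ) (M : Matrix (Fin 2) (Fin 2) ℝ) :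
    ‖Rmat α * M * Rmat β‖ = ‖M‖ := by
  rw [CStarRing.norm_mul_mem_unitary _ (Rmat_mem_unitary β),
    CStarRing.norm_mem_unitary_mul _ (Rmat_mem_unitary α)]

theorem sum_sq_Lmat_mul_Rmat_mul_Lmat (a b θ : ℝ) :
    ∑ i, ∑ j, (Lmat b * Rmat θ * Lmat a) i j ^ 2 =
      (a ^ 2 * b ^ 2 + a⁻¹ ^ 2 * b⁻¹ ^ 2) * cos θ ^ 2 +
        (a ^ 2 * b⁻¹ ^ 2 + a⁻¹ ^ 2 * b ^ 2) * sin θ ^ 2 := by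
  simp [Lmat, Rmat, Matrix.mul_apply]
  ring

theorem norm_of_product_of_hyperbolic_general
    (A B : Matrix (Fin 2) (Fin 2) ℝ)
    (φA ψA φB ψB : ℝ)
    (hAdec : A = Rmat ψA * Lmat (opNorm A) * Rmat φA)
    (hBdec : B = Rmat ψB * Lmat (opNorm B) * Rmat φB) :
    (1 / 4) * ((opNorm A ^ 2 * opNorm B ^ 2 + (opNorm A)⁻¹ ^ 2 * (opNorm B)⁻¹ ^ 2) *
        Real.cos (φB + ψA) ^ 2 +
      (opNorm A ^ 2 * (opNorm B)⁻¹ ^ 2 + (opNorm A)⁻¹ ^ 2 * opNorm B ^ 2) *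
        Real.sin (φB + ψA) ^ 2) ≤ opNorm (B * A) ^ 2 ∧
    opNorm (B * A) ^ 2 ≤
      (opNorm A ^ 2 * opNorm B ^ 2 + (opNorm A)⁻¹ ^ 2 * (opNorm B)⁻¹ ^ 2) *
        Real.cos (φB + ψA) ^ 2 +
      (opNorm A ^ 2 * (opNorm B)⁻¹ ^ 2 + (opNorm A)⁻¹ ^ 2 * opNorm B ^ 2) *
        Real.sin (φB + ψA) ^ 2 := by
  set M := Lmat (opNorm B) * Rmat (φB + ψA) * Lmat (opNorm A)
  have hBA : B * A = Rmat ψB * M * Rmat φA := by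
    rw [hAdec, hBdec]
    simp only [M, ← Rmat_mul_Rmat, Matrix.mul_assoc]
  have hnorm : opNorm (B * A) = ‖M‖ := by
    rw [opNorm_eq_l2_opNorm, hBA, l2_opNorm_Rmat_mul_mul_Rmat]
  have hupper := M.sq_l2_opNorm_le_sum_sq
  have hlower := M.sum_sq_le_card_mul_sq_l2_opNorm
  rw [sum_sq_Lmat_mul_Rmat_mul_Lmat] at hupper hlower
  rw [Fintype.card_fin] at hlower
  rw [hnorm]
  exact ⟨by linarith [sq_nonneg ‖M‖], hupper⟩

theorem norm_of_product_of_hyperbolic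
    (A B : Matrix (Fin 2) (Fin 2) ℝ)
    (hA : A.det = 1) (hB : B.det = 1)
    (hAn : 1 < opNorm A) (hBn : 1 < opNorm B)
    (φA ψA φB ψB : ℝ)
    (hAdec : A = Rmat ψA * Lmat (opNorm A) * Rmat φA)
    (hBdec : B = Rmat ψB * Lmat (opNorm B) * Rmat φB) :
    (1 / 4) * ((opNorm A ^ 2 * opNorm B ^ 2 + (opNorm A)⁻¹ ^ 2 * (opNorm B)⁻¹ ^ 2) *
        Real.cos (φB + ψA) ^ 2 +
      (opNorm A ^ 2 * (opNorm B)⁻¹ ^ 2 + (opNorm A)⁻¹ ^ 2 * opNorm B ^ 2) *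
        Real.sin (φB + ψA) ^ 2) ≤ opNorm (B * A) ^ 2 ∧
    opNorm (B * A) ^ 2 ≤
      (opNorm A ^ 2 * opNorm B ^ 2 + (opNorm A)⁻¹ ^ 2 * (opNorm B)⁻¹ ^ 2) *
        Real.cos (φB + ψA) ^ 2 +
      (opNorm A ^ 2 * (opNorm B)⁻¹ ^ 2 + (opNorm A)⁻¹ ^ 2 * opNorm B ^ 2) *
        Real.sin (φB + ψA) ^ 2 :=
  norm_of_product_of_hyperbolic_general A B φA ψA φB ψB hAdec hBdec
end

section
/- Let λ_A, λ_B > 1 and θ ∈ ℝ, and set V(s) = Λ_{λ_B} · R_θ · Λ_{λ_A} · (cos s, sin s)ᵀ for s ∈ ℝ. Then every critical point s₀ of the function s ↦ |V(s)|² satisfies ((λ_A²λ_B² − λ_A⁻²λ_B⁻²)·cos²θ + (λ_A²λ_B⁻² − λ_A⁻²λ_B²)·sin²θ)·sin 2s₀ = −(λ_B² − λ_B⁻²)·sin 2θ·cos 2s₀. In particular, if sin 2θ ≠ 0 and sin 2s₀ ≠ 0, then −cot 2s₀ = a·cot θ + b·tan θ, where a = (λ_A²λ_B² − λ_A⁻²λ_B⁻²)/(2(λ_B²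 − λ_B⁻²)) and b = (λ_A²λ_B⁻² − λ_A⁻²λ_B²)/(2(λ_B² − λ_B⁻²)). -/
open Real

theorem critical_points_of_expansion
    (lA lB θ : ℝ) (hlA : 1 < lA) (hlB : 1 < lB) (s₀ : ℝ)
    (hcrit : HasDerivAt
      (fun s : ℝ =>
        ((Lmat lB * Rmat θ * Lmat lA).mulVec ![Real.cos s, Real.sin s] 0) ^ 2 +
        ((Lmat lB * Rmat θ * Lmat lA).mulVec ![Real.cos s, Real.sin s] 1) ^ 2)
      0 s₀) :
    ((lA ^ 2 * lB ^ 2 - lA⁻¹ ^ 2 * lB⁻¹ ^ 2) * Real.cos θ ^ 2 +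
        (lA ^ 2 * lB⁻¹ ^ 2 - lA⁻¹ ^ 2 * lB ^ 2) * Real.sin θ ^ 2) * Real.sin (2 * s₀) =
      -(lB ^ 2 - lB⁻¹ ^ 2) * Real.sin (2 * θ) * Real.cos (2 * s₀) ∧
    (Real.sin (2 * θ) ≠ 0 → Real.sin (2 * s₀) ≠ 0 →
      -Real.cot (2 * s₀) =
        (lA ^ 2 * lB ^ 2 - lA⁻¹ ^ 2 * lB⁻¹ ^ 2) / (2 * (lB ^ 2 - lB⁻¹ ^ 2)) * Real.cot θ +
        (lA ^ 2 * lB⁻¹ ^ 2 - lA⁻¹ ^ 2 * lB ^ 2) / (2 * (lB ^ 2 - lB⁻¹ ^ 2)) * Real.tan θ) := by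
  have hlA0 : lA ≠ 0 := by positivity
  have hlB0 : lB ≠ 0 := by positivity
  have hx : lA * lA⁻¹ = 1 := mul_inv_cancel₀ hlA0
  have hy : lB * lB⁻¹ = 1 := mul_inv_cancel₀ hlB0
  have hfun : (fun s : ℝ =>
      ((Lmat lB * Rmat θ * Lmat lA).mulVec ![Real.cos s, Real.sin s] 0) ^ 2 +
      ((Lmat lB * Rmat θ * Lmat lA).mulVec ![Real.cos s, Real.sin s] 1) ^ 2)
      = fun s => (lB * Real.cos θ * lA * Real.cos s + -(lB * Real.sin θ) * lA⁻¹ * Real.sin s) ^ 2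
        + (lB⁻¹ * Real.sin θ * lA * Real.cos s + lB⁻¹ * Real.cos θ * lA⁻¹ * Real.sin s) ^ 2 := by
    funext s
    simp [Lmat, Rmat, Matrix.mulVec, Matrix.mul_apply, Fin.sum_univ_two, dotProduct]
    try ring
  rw [hfun] at hcrit
  have hc1 : HasDerivAt Real.cos (-Real.sin s₀) s₀ := Real.hasDerivAt_cos s₀
  have hs1 : HasDerivAt Real.sin (Real.cos s₀) s₀ := Real.hasDerivAt_sin s₀
  have h1 := (((hc1.const_mul (lB * Real.cos θ * lA)).add
      (hs1.const_mul (-(lB * Real.sin θ) * lA⁻¹))).pow 2)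
  have h2 := (((hc1.const_mul (lB⁻¹ * Real.sin θ * lA)).add
      (hs1.const_mul (lB⁻¹ * Real.cos θ * lA⁻¹))).pow 2)
  have heq := (h1.add h2).unique hcrit
  norm_num at heq
  have hP : Real.sin s₀ ^ 2 + Real.cos s₀ ^ 2 = 1 := Real.sin_sq_add_cos_sq s₀
  have htmp : Real.cos (2 * s₀) = Real.cos s₀ ^ 2 - Real.sin s₀ ^ 2 := by
    rw [Real.cos_two_mul]; linarith
  have key : ((lA ^ 2 * lB ^ 2 - lA⁻¹ ^ 2 * lB⁻¹ ^ 2) * Real.cos θ ^ 2 +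
        (lA ^ 2 * lB⁻¹ ^ 2 - lA⁻¹ ^ 2 * lB ^ 2) * Real.sin θ ^ 2) * Real.sin (2 * s₀) =
      -(lB ^ 2 - lB⁻¹ ^ 2) * Real.sin (2 * θ) * Real.cos (2 * s₀) := by
    rw [Real.sin_two_mul, Real.sin_two_mul, htmp]
    linear_combination (-1) * heq + (-2) * Real.sin θ * Real.cos θ * (lB ^ 2 - lB⁻¹ ^ 2) *
      (Real.cos s₀ ^ 2 - Real.sin s₀ ^ 2) * hx
  refine ⟨key, fun h2θ h2s => ?_⟩
  have hsθ : Real.sin θ ≠ 0 := fun h => h2θ (by rw [Real.sin_two_mul, h]; ring)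
  have hcθ : Real.cos θ ≠ 0 := fun h => h2θ (by rw [Real.sin_two_mul, h]; ring)
  rw [show Real.sin (2 * θ) = 2 * Real.sin θ * Real.cos θ from Real.sin_two_mul θ] at key
  rw [Real.cot_eq_cos_div_sin, Real.cot_eq_cos_div_sin, Real.tan_eq_sin_div_cos]
  obtain ⟨u, hu⟩ : ∃ u, lA⁻¹ = u := ⟨_, rfl⟩
  obtain ⟨v, hv⟩ : ∃ v, lB⁻¹ = v := ⟨_, rfl⟩
  rw [hu, hv] at key ⊢
  have hK : lB ^ 2 - v ^ 2 ≠ 0 := by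
    rw [← hv]
    have h1 : lB⁻¹ < 1 := inv_lt_one_of_one_lt₀ hlB
    have h0 : (0:ℝ) < lB⁻¹ := inv_pos.mpr (lt_trans one_pos hlB)
    nlinarith
  have hden : 2 * (lB ^ 2 - v ^ 2) * Real.sin θ * Real.cos θ ≠ 0 := by
    exact mul_ne_zero (mul_ne_zero (mul_ne_zero two_ne_zero hK) hsθ) hcθ
  have hrhs : (lA ^ 2 * lB ^ 2 - u ^ 2 * v ^ 2) / (2 * (lB ^ 2 - v ^ 2)) * (Real.cos θ / Real.sin θ) +
      (lA ^ 2 * v ^ 2 - u ^ 2 * lB ^ 2) / (2 * (lB ^ 2 - v ^ 2)) * (Real.sin θ / Real.cos θ)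
      = ((lA ^ 2 * lB ^ 2 - u ^ 2 * v ^ 2) * Real.cos θ ^ 2 +
          (lA ^ 2 * v ^ 2 - u ^ 2 * lB ^ 2) * Real.sin θ ^ 2) /
        (2 * (lB ^ 2 - v ^ 2) * Real.sin θ * Real.cos θ) := by
    field_simp
  rw [hrhs, ← neg_div, div_eq_div_iff h2s hden]
  linear_combination (-1) * key
end

section
/- Let λ_A, λ_B > 1 and θ ∈ ℝ, let M = Λ_{λ_B} · R_θ · Λ_{λ_A}, and set W(s) = Mᵀ · (cos s, sin s)ᵀ for s ∈ ℝ. Then every critical point s₀ of the function s ↦ |W(s)|² satisfies ((λ_A²λ_B² − λ_A⁻²λ_B⁻²)·cos²θ + (λ_A⁻²λ_B² − λ_A²λ_B⁻²)·sin²θ)·sin 2s₀ = (λ_A² − λ_A⁻²)·sin 2θ·cos 2s₀. In particular, if sin 2θ ≠ 0 and sin 2s₀ ≠ 0, then cot 2s₀ = a′·cot θ − b′·tan θ, where a′ = (λ_A²λ_B² − λ_A⁻²λ_B⁻²)/(2(λ_A² − λ_A⁻²)) and b′ = (λ_A²λ_B⁻² − λ_A⁻²λ_B²)/(2(λ_A²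 − λ_A⁻²)). -/
open Real

theorem critical_points_of_contraction
    (lA lB θ : ℝ) (hlA : 1 < lA) (hlB : 1 < lB) (s₀ : ℝ)
    (hcrit : HasDerivAt
      (fun s : ℝ =>
        ((Lmat lB * Rmat θ * Lmat lA).transpose.mulVec ![Real.cos s, Real.sin s] 0) ^ 2 +
        ((Lmat lB * Rmat θ * Lmat lA).transpose.mulVec ![Real.cos s, Real.sin s] 1) ^ 2)
      0 s₀) :
    ((lA ^ 2 * lB ^ 2 - lA⁻¹ ^ 2 * lB⁻¹ ^ 2) * Real.cos θ ^ 2 +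
        (lA⁻¹ ^ 2 * lB ^ 2 - lA ^ 2 * lB⁻¹ ^ 2) * Real.sin θ ^ 2) * Real.sin (2 * s₀) =
      (lA ^ 2 - lA⁻¹ ^ 2) * Real.sin (2 * θ) * Real.cos (2 * s₀) ∧
    (Real.sin (2 * θ) ≠ 0 → Real.sin (2 * s₀) ≠ 0 →
      Real.cot (2 * s₀) =
        (lA ^ 2 * lB ^ 2 - lA⁻¹ ^ 2 * lB⁻¹ ^ 2) / (2 * (lA ^ 2 - lA⁻¹ ^ 2)) * Real.cot θ -
        (lA ^ 2 * lB⁻¹ ^ 2 - lA⁻¹ ^ 2 * lB ^ 2) / (2 * (lA ^ 2 - lA⁻¹ ^ 2)) * Real.tan θ) := by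
  set aC := lA * (lB * Real.cos θ) with haC
  set aS := lA * (lB⁻¹ * Real.sin θ) with haS
  set bC := lA⁻¹ * (-(lB * Real.sin θ)) with hbC
  set bS := lA⁻¹ * (lB⁻¹ * Real.cos θ) with hbS
  have hfun : (fun s : ℝ =>
        ((Lmat lB * Rmat θ * Lmat lA).transpose.mulVec ![Real.cos s, Real.sin s] 0) ^ 2 +
        ((Lmat lB * Rmat θ * Lmat lA).transpose.mulVec ![Real.cos s, Real.sin s] 1) ^ 2)
      = fun s : ℝ => (aC * Real.cos s + aS * Real.sin s) ^ 2 +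
          (bC * Real.cos s + bS * Real.sin s) ^ 2 := by
    funext s
    simp [Lmat, Rmat, Matrix.mulVec, Matrix.mul_apply, Fin.sum_univ_two, haC, haS, hbC, hbS]
    ring
  rw [hfun] at hcrit
  have h1 : HasDerivAt (fun s : ℝ => (aC * Real.cos s + aS * Real.sin s) ^ 2 +
      (bC * Real.cos s + bS * Real.sin s) ^ 2)
      (2 * (aC * Real.cos s₀ + aS * Real.sin s₀) ^ 1 * (aC * (-Real.sin s₀) + aS * Real.cos s₀) +
       2 * (bC * Real.cos s₀ + bS * Real.sin s₀) ^ 1 * (bC * (-Real.sin s₀) + bS * Real.cos s₀)) s₀ := by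
    exact (((Real.hasDerivAt_cos s₀).const_mul aC |>.add
      ((Real.hasDerivAt_sin s₀).const_mul aS)).pow 2).add
      (((Real.hasDerivAt_cos s₀).const_mul bC |>.add
      ((Real.hasDerivAt_sin s₀).const_mul bS)).pow 2)
  have hD := h1.unique hcrit
  have hs2 : Real.sin (2 * s₀) = 2 * Real.sin s₀ * Real.cos s₀ := Real.sin_two_mul s₀
  have hc2 : Real.cos (2 * s₀) = Real.cos s₀ ^ 2 - Real.sin s₀ ^ 2 := Real.cos_two_mul' s₀
  have ht2 : Real.sin (2 * θ) = 2 * Real.sin θ * Real.cos θ := Real.sin_two_mul θ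
  have hmain : ((lA ^ 2 * lB ^ 2 - lA⁻¹ ^ 2 * lB⁻¹ ^ 2) * Real.cos θ ^ 2 +
        (lA⁻¹ ^ 2 * lB ^ 2 - lA ^ 2 * lB⁻¹ ^ 2) * Real.sin θ ^ 2) * Real.sin (2 * s₀) =
      (lA ^ 2 - lA⁻¹ ^ 2) * Real.sin (2 * θ) * Real.cos (2 * s₀) := by
    rw [hs2, hc2, ht2]
    simp only [haC, haS, hbC, hbS] at hD
    have hB : lB * lB⁻¹ = 1 := mul_inv_cancel₀ (by positivity)
    linear_combination -hD + 2 * Real.cos θ * Real.sin θ *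
      (Real.cos s₀ ^ 2 - Real.sin s₀ ^ 2) * (lA ^ 2 - lA⁻¹ ^ 2) * hB
  refine ⟨hmain, fun hθ hs => ?_⟩
  have hsθ : Real.sin θ ≠ 0 := fun h => hθ (by rw [ht2, h]; ring)
  have hcθ : Real.cos θ ≠ 0 := fun h => hθ (by rw [ht2, h]; ring)
  have hlA0 : (0:ℝ) < lA := lt_trans one_pos hlA
  have hAne : lA ^ 2 - lA⁻¹ ^ 2 ≠ 0 := by
    have h1 : lA⁻¹ < 1 := inv_lt_one_of_one_lt₀ hlA
    have h2 : (0:ℝ) < lA⁻¹ := inv_pos.mpr hlA0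
    nlinarith
  rw [ht2] at hmain
  clear hcrit hfun h1 hD hθ hs2 hc2 ht2 haC haS hbC hbS
  have hu : lA * lA⁻¹ = 1 := mul_inv_cancel₀ (by positivity)
  have hv : lB * lB⁻¹ = 1 := mul_inv_cancel₀ (by positivity)
  generalize lA⁻¹ = u at *
  generalize lB⁻¹ = v at *
  have hden : 2 * (lA ^ 2 - u ^ 2) * Real.sin θ * Real.cos θ ≠ 0 := by
    exact mul_ne_zero (mul_ne_zero (mul_ne_zero two_ne_zero hAne) hsθ) hcθ
  have key : Real.cot (2 * s₀) =
      ((lA ^ 2 * lB ^ 2 - u ^ 2 * v ^ 2) * Real.cos θ ^ 2 +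
        (u ^ 2 * lB ^ 2 - lA ^ 2 * v ^ 2) * Real.sin θ ^ 2) /
      (2 * (lA ^ 2 - u ^ 2) * Real.sin θ * Real.cos θ) := by
    rw [Real.cot_eq_cos_div_sin, div_eq_div_iff hs hden]
    linear_combination -hmain
  rw [key, Real.cot_eq_cos_div_sin, Real.tan_eq_sin_div_cos]
  field_simp
  ring
end

section
/- There is a universal constant C > 0 such that for all λ_A, λ_B > 1 and all θ ∈ (0, π) with θ ≠ π/2: dist(φ(λ_A, λ_B, θ), πℤ) ≤ C·λ_A⁻²·|θ − π/2|⁻¹ and dist(ψ(λ_A, λ_B, θ), πℤ) ≤ C·λ_B⁻²·|θ − π/2|⁻¹, where dist(x, πℤ) is the distance from x to the nearest integer multiple of π. -/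
open Real

/-- a = (λ_A²λ_B² − λ_A⁻²λ_B⁻²)/(2(λ_B² − λ_B⁻²)). -/
noncomputable def aCoef (lA lB : ℝ) : ℝ :=
  (lA ^ 2 * lB ^ 2 - lA⁻¹ ^ 2 * lB⁻¹ ^ 2) / (2 * (lB ^ 2 - lB⁻¹ ^ 2))

/-- b = (λ_A²λ_B⁻² − λ_A⁻²λ_B²)/(2(λ_B² − λ_B⁻²)). -/
noncomputable def bCoef (lA lB : ℝ) : ℝ :=
  (lA ^ 2 * lB⁻¹ ^ 2 - lA⁻¹ ^ 2 * lB ^ 2) / (2 * (lB ^ 2 - lB⁻¹ ^ 2))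

/-- a′ = (λ_A²λ_B² − λ_A⁻²λ_B⁻²)/(2(λ_A² − λ_A⁻²)). -/
noncomputable def aCoef' (lA lB : ℝ) : ℝ :=
  (lA ^ 2 * lB ^ 2 - lA⁻¹ ^ 2 * lB⁻¹ ^ 2) / (2 * (lA ^ 2 - lA⁻¹ ^ 2))

/-- b′ = (λ_A²λ_B⁻² − λ_A⁻²λ_B²)/(2(λ_A² − λ_A⁻²)). -/
noncomputable def bCoef' (lA lB : ℝ) : ℝ :=
  (lA ^ 2 * lB⁻¹ ^ 2 - lA⁻¹ ^ 2 * lB ^ 2) / (2 * (lA ^ 2 - lA⁻¹ ^ 2))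

/-- The angle correction φ(λ_A, λ_B, θ) = φ_A − φ_{BA}, for θ ∈ (0, π), θ ≠ π/2. -/
noncomputable def phiFun (lA lB θ : ℝ) : ℝ :=
  if θ < π / 2 then
    -(1 / 2) * (π / 2 - Real.arctan (aCoef lA lB * Real.cot θ + bCoef lA lB * Real.tan θ))
  else if 0 ≤ bCoef lA lB then
    π / 2 - (1 / 2) * (π / 2 - Real.arctan (aCoef lA lB * Real.cot θ + bCoef lA lB * Real.tan θ))
  else
    -(π / 2) - (1 / 2) * (π / 2 - Real.arctan (aCoef lA lB * Real.cot θ + bCoef lA lB * Real.tan θ))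

/-- The angle correction ψ(λ_A, λ_B, θ) = ψ_{BA} − ψ_B, for θ ∈ (0, π), θ ≠ π/2. -/
noncomputable def psiFun (lA lB θ : ℝ) : ℝ :=
  if θ < π / 2 then
    -(1 / 2) * (π / 2 - Real.arctan (aCoef' lA lB * Real.cot θ - bCoef' lA lB * Real.tan θ))
  else if 0 ≤ bCoef' lA lB then
    π / 2 - (1 / 2) * (π / 2 - Real.arctan (aCoef' lA lB * Real.cot θ - bCoef' lA lB * Real.tan θ))
  else
    -(π / 2) - (1 / 2) * (π / 2 - Real.arctan (aCoef' lA lB * Real.cot θ - bCoef' lA lB * Real.tan θ))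


lemma my_arctan_le_self {x : ℝ} (hx : 0 ≤ x) : Real.arctan x ≤ x := by
  rcases eq_or_lt_of_le hx with h | h
  · simp [← h]
  · have h1 : 0 < Real.arctan x := by
      rw [← Real.arctan_zero]; exact Real.arctan_strictMono h
    have h2 := Real.arctan_lt_pi_div_two x
    have := Real.lt_tan h1 h2
    rw [Real.tan_arctan] at this
    linarith

lemma key_est (K A B δ : ℝ) (hK : 1 < K) (hA : K / 2 ≤ A) (hB : -(2 * K)⁻¹ ≤ B)
    (hδ0 : 0 < δ) (hδ2 : δ < π / 2) :
    (1 / 2) * (π / 2 - Real.arctan (A * Real.tan δ + B * (Real.tan δ)⁻¹)) ≤ 4 * K⁻¹ * δ⁻¹ := by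
  have hK0 : (0 : ℝ) < K := by linarith
  have hKδ : 0 < K * δ := by positivity
  have hrhs : 4 * K⁻¹ * δ⁻¹ = 4 / (K * δ) := by field_simp
  have ht : δ < Real.tan δ := Real.lt_tan hδ0 hδ2
  have ht0 : 0 < Real.tan δ := lt_trans hδ0 ht
  rw [hrhs]
  rcases le_or_gt (K * δ) 2 with h | h
  · have h1 := Real.neg_pi_div_two_lt_arctan (A * Real.tan δ + B * (Real.tan δ)⁻¹)
    have hpi : π < 4 := by linarith [Real.pi_lt_d2]
    have h3 : (2 : ℝ) ≤ 4 / (K * δ) := by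
      rw [le_div_iff₀ hKδ]; linarith
    linarith
  · obtain ⟨Y, hYdef⟩ : ∃ Y, A * Real.tan δ + B * (Real.tan δ)⁻¹ = Y := ⟨_, rfl⟩
    rw [hYdef]
    have htinv : (Real.tan δ)⁻¹ ≤ δ⁻¹ := inv_anti₀ hδ0 ht.le
    have hAt : K / 2 * δ ≤ A * Real.tan δ := by nlinarith
    have hBt : -(2 * K)⁻¹ * δ⁻¹ ≤ B * (Real.tan δ)⁻¹ := by
      rcases le_or_gt 0 B with hb | hb
      · have h5 : 0 ≤ B * (Real.tan δ)⁻¹ := by positivity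
        have h6 : 0 < (2 * K)⁻¹ * δ⁻¹ := by positivity
        linarith
      · calc -(2 * K)⁻¹ * δ⁻¹ ≤ B * δ⁻¹ :=
              mul_le_mul_of_nonneg_right hB (by positivity)
          _ ≤ B * (Real.tan δ)⁻¹ := by nlinarith
    have hquart : (2 * K)⁻¹ * δ⁻¹ ≤ 1 / 4 := by
      rw [← mul_inv]
      have h4 : (4 : ℝ) ≤ 2 * K * δ := by nlinarith
      calc (2 * K * δ)⁻¹ ≤ (4 : ℝ)⁻¹ := inv_anti₀ (by norm_num) h4
        _ = 1 / 4 := by norm_num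
    have hY : K * δ / 4 ≤ Y := by
      rw [← hYdef]; nlinarith
    have hY0 : 0 < Y := by linarith
    have h1 : π / 2 - Real.arctan Y ≤ Y⁻¹ := by
      rw [← Real.arctan_inv_of_pos hY0]
      exact my_arctan_le_self (by positivity)
    have h2 : Y⁻¹ ≤ 4 / (K * δ) := by
      have := inv_anti₀ (by positivity : (0:ℝ) < K * δ / 4) hY
      calc Y⁻¹ ≤ (K * δ / 4)⁻¹ := this
        _ = 4 / (K * δ) := by field_simp
    have h5 : 0 < 4 / (K * δ) := by positivity
    linarith

lemma cot_eq_inv_tan' (θ : ℝ) : Real.cot θ = (Real.tan θ)⁻¹ := by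
  rw [Real.cot_eq_cos_div_sin, Real.tan_eq_sin_div_cos, inv_div]

lemma est_lt (K A B θ : ℝ) (hK : 1 < K) (hA : K / 2 ≤ A) (hB : -(2 * K)⁻¹ ≤ B)
    (h0 : 0 < θ) (hθ : θ < π / 2) :
    |(-(1 / 2) * (π / 2 - Real.arctan (A * Real.cot θ + B * Real.tan θ)))| ≤
      4 * K⁻¹ * |θ - π / 2|⁻¹ := by
  have habs : |θ - π / 2| = π / 2 - θ := by
    rw [abs_of_neg (by linarith)]; ring
  have hcot : Real.cot θ = Real.tan (π / 2 - θ) := by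
    rw [cot_eq_inv_tan', Real.tan_pi_div_two_sub]
  have htan : Real.tan θ = (Real.tan (π / 2 - θ))⁻¹ := by
    rw [Real.tan_pi_div_two_sub, inv_inv]
  have harc := Real.arctan_lt_pi_div_two (A * Real.cot θ + B * Real.tan θ)
  rw [habs, neg_mul, abs_neg, abs_of_nonneg (by linarith), hcot, htan]
  exact key_est K A B _ hK hA hB (by linarith) (by linarith)

lemma est_gt (K A B θ : ℝ) (hK : 1 < K) (hA : K / 2 ≤ A) (hB : -(2 * K)⁻¹ ≤ B)
    (hθ : π / 2 < θ) (hπ : θ < π) :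
    |π / 2 - (1 / 2) * (π / 2 - Real.arctan (A * Real.cot θ + B * Real.tan θ))| ≤
      4 * K⁻¹ * |θ - π / 2|⁻¹ := by
  have habs : |θ - π / 2| = θ - π / 2 := abs_of_pos (by linarith)
  have htan : Real.tan θ = -(Real.tan (θ - π / 2))⁻¹ := by
    have h1 := Real.tan_pi_div_two_sub (π / 2 - θ)
    have h2 : π / 2 - (π / 2 - θ) = θ := by ring
    rw [h2] at h1
    have h3 : π / 2 - θ = -(θ - π / 2) := by ring
    rw [h1, h3, Real.tan_neg, inv_neg]
  have hcot : Real.cot θ = -Real.tan (θ - π / 2) := by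
    rw [cot_eq_inv_tan', htan, inv_neg, inv_inv]
  have hX : A * Real.cot θ + B * Real.tan θ =
      -(A * Real.tan (θ - π / 2) + B * (Real.tan (θ - π / 2))⁻¹) := by
    rw [hcot, htan]; ring
  have key := key_est K A B (θ - π / 2) hK hA hB (by linarith) (by linarith)
  have harc := Real.arctan_lt_pi_div_two (A * Real.tan (θ - π / 2) + B * (Real.tan (θ - π / 2))⁻¹)
  have heq : π / 2 - (1 / 2) * (π / 2 - Real.arctan (A * Real.cot θ + B * Real.tan θ)) =
      (1 / 2) * (π / 2 - Real.arctan (A * Real.tan (θ - π / 2) + B * (Real.tan (θ - π / 2))⁻¹)) := by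
    rw [hX, Real.arctan_neg]; ring
  rw [habs, heq, abs_of_nonneg (by linarith)]
  exact key

section coefs
variable {lA lB : ℝ} (hA : 1 < lA) (hB : 1 < lB)
include hA hB

lemma basic_facts : 0 < lA⁻¹ ∧ lA⁻¹ < 1 ∧ lA * lA⁻¹ = 1 := by
  refine ⟨by positivity, inv_lt_one_of_one_lt₀ hA, mul_inv_cancel₀ (by positivity)⟩

lemma denB_pos : 0 < 2 * (lB ^ 2 - lB⁻¹ ^ 2) := by
  obtain ⟨h1, h2, h3⟩ := basic_facts hB hA
  nlinarith

lemma denA_pos : 0 < 2 * (lA ^ 2 - lA⁻¹ ^ 2) := by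
  obtain ⟨h1, h2, h3⟩ := basic_facts hA hB
  nlinarith

lemma aCoef_ge : lA ^ 2 / 2 ≤ aCoef lA lB := by
  obtain ⟨ha1, ha2, ha3⟩ := basic_facts hA hB
  obtain ⟨hb1, hb2, hb3⟩ := basic_facts hB hA
  rw [aCoef, le_div_iff₀ (denB_pos hA hB)]
  have hAA : lA⁻¹ ^ 2 ≤ lA ^ 2 := by nlinarith
  nlinarith [mul_le_mul_of_nonneg_right hAA (sq_nonneg lB⁻¹)]

lemma bCoef_ge : -(2 * lA ^ 2)⁻¹ ≤ bCoef lA lB := by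
  obtain ⟨ha1, ha2, ha3⟩ := basic_facts hA hB
  obtain ⟨hb1, hb2, hb3⟩ := basic_facts hB hA
  have hrw : ((2 * lA ^ 2)⁻¹ : ℝ) = lA⁻¹ ^ 2 / 2 := by
    rw [mul_inv, ← inv_pow]; ring
  rw [bCoef, hrw, le_div_iff₀ (denB_pos hA hB)]
  have hAA : lA⁻¹ ^ 2 ≤ lA ^ 2 := by nlinarith
  nlinarith [mul_le_mul_of_nonneg_right hAA (sq_nonneg lB⁻¹)]

lemma aCoef'_ge : lB ^ 2 / 2 ≤ aCoef' lA lB := by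
  obtain ⟨ha1, ha2, ha3⟩ := basic_facts hA hB
  obtain ⟨hb1, hb2, hb3⟩ := basic_facts hB hA
  rw [aCoef', le_div_iff₀ (denA_pos hA hB)]
  have hBB : lB⁻¹ ^ 2 ≤ lB ^ 2 := by nlinarith
  nlinarith [mul_le_mul_of_nonneg_right hBB (sq_nonneg lA⁻¹)]

lemma bCoef'_le : -(2 * lB ^ 2)⁻¹ ≤ -bCoef' lA lB := by
  obtain ⟨ha1, ha2, ha3⟩ := basic_facts hA hB
  obtain ⟨hb1, hb2, hb3⟩ := basic_facts hB hA
  have hrw : ((2 * lB ^ 2)⁻¹ : ℝ) = lB⁻¹ ^ 2 / 2 := by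
    rw [mul_inv, ← inv_pow]; ring
  have h : bCoef' lA lB ≤ (2 * lB ^ 2)⁻¹ := by
    rw [bCoef', hrw, div_le_div_iff₀ (denA_pos hA hB) (by norm_num)]
    have hBB : lB⁻¹ ^ 2 ≤ lB ^ 2 := by nlinarith
    nlinarith [mul_le_mul_of_nonneg_right hBB (sq_nonneg lA⁻¹)]
  linarith


end coefs

theorem angle_corrections_close_to_piZ :
    ∃ C : ℝ, 0 < C ∧ ∀ lA lB θ : ℝ, 1 < lA → 1 < lB → 0 < θ → θ < π → θ ≠ π / 2 →
      (∃ m : ℤ, |phiFun lA lB θ - m * π| ≤ C * lA⁻¹ ^ 2 * |θ - π / 2|⁻¹) ∧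
      (∃ m : ℤ, |psiFun lA lB θ - m * π| ≤ C * lB⁻¹ ^ 2 * |θ - π / 2|⁻¹) := by
  refine ⟨4, by norm_num, fun lA lB θ hlA hlB h0 hπ hne => ?_⟩
  have hKA : (1 : ℝ) < lA ^ 2 := by nlinarith
  have hKB : (1 : ℝ) < lB ^ 2 := by nlinarith
  have hinvA : (lA⁻¹ ^ 2 : ℝ) = (lA ^ 2)⁻¹ := by rw [inv_pow]
  have hinvB : (lB⁻¹ ^ 2 : ℝ) = (lB ^ 2)⁻¹ := by rw [inv_pow]
  have hsub : aCoef' lA lB * Real.cot θ - bCoef' lA lB * Real.tan θ =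
      aCoef' lA lB * Real.cot θ + -bCoef' lA lB * Real.tan θ := by ring
  constructor
  · by_cases hlt : θ < π / 2
    · refine ⟨0, ?_⟩
      unfold phiFun
      rw [if_pos hlt, Int.cast_zero, zero_mul, sub_zero, hinvA]
      exact est_lt (lA ^ 2) _ _ θ hKA (aCoef_ge hlA hlB) (bCoef_ge hlA hlB) h0 hlt
    · have hgt : π / 2 < θ := lt_of_le_of_ne (not_lt.mp hlt) (Ne.symm hne)
      unfold phiFun
      rw [if_neg hlt]
      by_cases hb : 0 ≤ bCoef lA lB
      · refine ⟨0, ?_⟩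
        rw [if_pos hb, Int.cast_zero, zero_mul, sub_zero, hinvA]
        exact est_gt (lA ^ 2) _ _ θ hKA (aCoef_ge hlA hlB) (bCoef_ge hlA hlB) hgt hπ
      · refine ⟨-1, ?_⟩
        rw [if_neg hb, hinvA]
        have heq : -(π / 2) -
              (1 / 2) * (π / 2 - Real.arctan (aCoef lA lB * Real.cot θ + bCoef lA lB * Real.tan θ)) -
              ((-1 : ℤ) : ℝ) * π =
            π / 2 -
              (1 / 2) * (π / 2 - Real.arctan (aCoef lA lB * Real.cot θ + bCoef lA lB * Real.tan θ)) := by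
          push_cast; ring
        rw [heq]
        exact est_gt (lA ^ 2) _ _ θ hKA (aCoef_ge hlA hlB) (bCoef_ge hlA hlB) hgt hπ
  · by_cases hlt : θ < π / 2
    · refine ⟨0, ?_⟩
      unfold psiFun
      rw [if_pos hlt, Int.cast_zero, zero_mul, sub_zero, hinvB, hsub]
      exact est_lt (lB ^ 2) _ _ θ hKB (aCoef'_ge hlA hlB) (bCoef'_le hlA hlB) h0 hlt
    · have hgt : π / 2 < θ := lt_of_le_of_ne (not_lt.mp hlt) (Ne.symm hne)
      unfold psiFun
      rw [if_neg hlt]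
      by_cases hb : 0 ≤ bCoef' lA lB
      · refine ⟨0, ?_⟩
        rw [if_pos hb, Int.cast_zero, zero_mul, sub_zero, hinvB, hsub]
        exact est_gt (lB ^ 2) _ _ θ hKB (aCoef'_ge hlA hlB) (bCoef'_le hlA hlB) hgt hπ
      · refine ⟨-1, ?_⟩
        rw [if_neg hb, hinvB, hsub]
        have heq : -(π / 2) -
              (1 / 2) * (π / 2 - Real.arctan (aCoef' lA lB * Real.cot θ + -bCoef' lA lB * Real.tan θ)) -
              ((-1 : ℤ) : ℝ) * π =
            π / 2 -
              (1 / 2) * (π / 2 - Real.arctan (aCoef' lA lB * Real.cot θ + -bCoef' lA lB * Real.tan θ)) := by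
          push_cast; ring
        rw [heq]
        exact est_gt (lB ^ 2) _ _ θ hKB (aCoef'_ge hlA hlB) (bCoef'_le hlA hlB) hgt hπ
end

section
/- Let ω be an irrational number of bounded type, with continued-fraction denominators satisfying q_{k+1} ≤ M·q_k for all k. Then there exists k₁ ∈ ℕ, depending only on M, such that for every closed interval I₁ ⊂ ℝ/ℤ with 0 < |I₁| ≤ 1/100 the following holds: setting I₂ = I₁ + 1/2, I = I₁ ∪ I₂, letting min r = min_{x ∈ I} min{ n ≥ 1 : x + nω (mod 1) ∈ I } and max r̄ = max_{x ∈ (1/10)I₁} min{ n ≥ 1 : x + nω (mod 1) ∈ (1/10)I₁ }, one has M^{−k₁} ≤ (min r)/(max r̄) ≤ 1. -/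
open Real

/-- The denominators of the continued fraction convergents of ω. -/
noncomputable def cfDen (ω : ℝ) (k : ℕ) : ℝ := (GenContFract.of ω).dens k

noncomputable def cfNum (ω : ℝ) (k : ℕ) : ℝ := (GenContFract.of ω).nums k

lemma notTerm {ω : ℝ} (hω : Irrational ω) (n : ℕ) : ¬(GenContFract.of ω).TerminatedAt n := by
  intro h
  obtain ⟨q, hq⟩ := (GenContFract.terminates_iff_rat ω).mp ⟨n, h⟩
  exact hω ⟨q, hq.symm⟩

lemma one_le_cfDen {ω : ℝ} (hω : Irrational ω) (n : ℕ) : 1 ≤ cfDen ω n := by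
  have h := GenContFract.succ_nth_fib_le_of_nth_den (v := ω) (n := n) (Or.inr (notTerm hω _))
  have : (1:ℝ) ≤ (Nat.fib (n+1) : ℝ) := by
    exact_mod_cast Nat.one_le_iff_ne_zero.mpr (Nat.fib_pos.mpr n.succ_pos).ne'
  exact this.trans h

lemma cfDen_mono (ω : ℝ) : Monotone (cfDen ω) :=
  monotone_nat_of_le_succ fun _ => GenContFract.of_den_mono

lemma cfDen_unbounded {ω : ℝ} (hω : Irrational ω) (R : ℝ) : ∃ n, R < cfDen ω n := by
  obtain ⟨N, hN⟩ := exists_nat_gt R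
  refine ⟨N + 5, hN.trans_le ?_⟩
  have h1 : (N + 6 : ℕ) ≤ Nat.fib (N + 6) := Nat.le_fib_self (by omega)
  have h2 := GenContFract.succ_nth_fib_le_of_nth_den (v := ω) (n := N+5) (Or.inr (notTerm hω _))
  have : (N:ℝ) ≤ ((N + 6 : ℕ) : ℝ) := by push_cast; linarith
  refine this.trans (le_trans ?_ h2)
  exact_mod_cast h1

lemma exists_crossing {ω : ℝ} (hω : Irrational ω) {R : ℝ} (hR : 1 ≤ R) :
    ∃ j, cfDen ω j ≤ R ∧ R < cfDen ω (j+1) := by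
  have hex := cfDen_unbounded hω R
  have hfind := Nat.find_spec hex
  have hne : Nat.find hex ≠ 0 := by
    intro h0
    rw [h0] at hfind
    have h1 : cfDen ω 0 = 1 := GenContFract.zeroth_den_eq_one
    rw [h1] at hfind; linarith
  obtain ⟨j, hj⟩ := Nat.exists_eq_succ_of_ne_zero hne
  refine ⟨j, not_lt.mp (Nat.find_min hex (hj ▸ Nat.lt_succ_self j)), ?_⟩
  rw [← Nat.succ_eq_add_one, ← hj]; exact hfind

lemma approx_up {ω : ℝ} (hω : Irrational ω) (n : ℕ) :
    |cfDen ω n * ω - cfNum ω n| ≤ 1 / cfDen ω (n+1) := by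
  have h := GenContFract.abs_sub_convs_le (v := ω) (n := n) (notTerm hω n)
  rw [GenContFract.conv_eq_num_div_den] at h
  have hq : (0:ℝ) < cfDen ω n := lt_of_lt_of_le one_pos (one_le_cfDen hω n)
  have hq1 : (0:ℝ) < cfDen ω (n+1) := lt_of_lt_of_le one_pos (one_le_cfDen hω (n+1))
  have heq : cfDen ω n * (ω - cfNum ω n / cfDen ω n) = cfDen ω n * ω - cfNum ω n := by
    field_simp
  have key : |cfDen ω n * ω - cfNum ω n| = cfDen ω n * |ω - cfNum ω n / cfDen ω n| := by
    rw [← heq, abs_mul, abs_of_pos hq]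
  rw [key]
  calc cfDen ω n * |ω - cfNum ω n / cfDen ω n|
      ≤ cfDen ω n * (1 / (cfDen ω n * cfDen ω (n+1))) := by
        exact mul_le_mul_of_nonneg_left h hq.le
    _ = 1 / cfDen ω (n+1) := by field_simp

lemma cf_det {ω : ℝ} (hω : Irrational ω) (n : ℕ) :
    cfNum ω n * cfDen ω (n+1) - cfDen ω n * cfNum ω (n+1) = (-1)^(n+1) :=
  SimpContFract.determinant (s := SimpContFract.of ω) (notTerm hω n)

lemma cfDen_add2 {ω : ℝ} (hω : Irrational ω) (n : ℕ) :
    cfDen ω (n+1) + cfDen ω n ≤ cfDen ω (n+2) := by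
  obtain ⟨gp, hgp⟩ : ∃ gp, (GenContFract.of ω).s.get? (n+1) = some gp :=
    Option.ne_none_iff_exists'.mp (notTerm hω (n+1))
  have hrec := GenContFract.dens_recurrence hgp rfl rfl
  have ha : gp.a = 1 := GenContFract.of_partNum_eq_one (GenContFract.partNum_eq_s_a hgp)
  have hb : (1:ℝ) ≤ gp.b := GenContFract.of_one_le_get?_partDen (GenContFract.partDen_eq_s_b hgp)
  have h1 : 1 ≤ cfDen ω (n+1) := one_le_cfDen hω _
  simp only [cfDen] at *
  rw [hrec, ha]
  nlinarith

lemma approx_low {ω : ℝ} (hω : Irrational ω) (n : ℕ) :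
    1 / (2 * cfDen ω (n+1)) ≤ |cfDen ω n * ω - cfNum ω n| := by
  have hq0 : (1:ℝ) ≤ cfDen ω n := one_le_cfDen hω n
  have hq1 : (1:ℝ) ≤ cfDen ω (n+1) := one_le_cfDen hω (n+1)
  have hq2 : (1:ℝ) ≤ cfDen ω (n+2) := one_le_cfDen hω (n+2)
  have hmono : cfDen ω n ≤ cfDen ω (n+1) := cfDen_mono ω (Nat.le_succ n)
  have hadd2 : cfDen ω (n+1) + cfDen ω n ≤ cfDen ω (n+2) := cfDen_add2 hω n
  have hup := approx_up hω (n+1)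
  have hdet := cf_det hω n
  -- |q n * (p(n+1)/q(n+1)) - p n| = 1/q(n+1)
  have hdet_abs : |cfNum ω n * cfDen ω (n+1) - cfDen ω n * cfNum ω (n+1)| = 1 := by
    rw [hdet, abs_pow, abs_neg, abs_one, one_pow]
  -- triangle trick
  have key : (1:ℝ) ≤ |cfDen ω n * ω - cfNum ω n| * cfDen ω (n+1)
      + (cfDen ω n) * |cfDen ω (n+1) * ω - cfNum ω (n+1)| := by
    have htri : |cfNum ω n * cfDen ω (n+1) - cfDen ω n * cfNum ω (n+1)|
        ≤ |(cfDen ω n * ω - cfNum ω n) * cfDen ω (n+1)|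
          + |cfDen ω n * (cfDen ω (n+1) * ω - cfNum ω (n+1))| := by
      have : cfNum ω n * cfDen ω (n+1) - cfDen ω n * cfNum ω (n+1)
          = -((cfDen ω n * ω - cfNum ω n) * cfDen ω (n+1))
            + cfDen ω n * (cfDen ω (n+1) * ω - cfNum ω (n+1)) := by ring
      rw [this]
      exact (abs_add_le _ _).trans (by rw [abs_neg])
    rw [hdet_abs, abs_mul, abs_mul] at htri
    have e1 : |cfDen ω (n+1)| = cfDen ω (n+1) := abs_of_pos (by linarith)
    have e2 : |cfDen ω n| = cfDen ω n := abs_of_pos (by linarith)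
    rw [e1, e2] at htri
    linarith
  -- second term small
  have hsecond : cfDen ω n * |cfDen ω (n+1) * ω - cfNum ω (n+1)| ≤ 1/2 := by
    have h2q : 2 * cfDen ω n ≤ cfDen ω (n+2) := by linarith
    calc cfDen ω n * |cfDen ω (n+1) * ω - cfNum ω (n+1)|
        ≤ cfDen ω n * (1 / cfDen ω (n+2)) := by
          exact mul_le_mul_of_nonneg_left hup (by linarith)
      _ ≤ cfDen ω n * (1 / (2 * cfDen ω n)) := by
          apply mul_le_mul_of_nonneg_left _ (by linarith)
          apply one_div_le_one_div_of_le (by linarith) h2q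
      _ = 1/2 := by field_simp
  have hmain : (1:ℝ) ≤ |cfDen ω n * ω - cfNum ω n| * cfDen ω (n+1) * 2 := by linarith
  rw [div_le_iff₀ (by positivity : (0:ℝ) < 2 * cfDen ω (n+1))]
  calc (1:ℝ) ≤ |cfDen ω n * ω - cfNum ω n| * cfDen ω (n+1) * 2 := hmain
    _ = |cfDen ω n * ω - cfNum ω n| * (2 * cfDen ω (n+1)) := by ring

lemma intCoeffs {ω : ℝ} (hω : Irrational ω) :
    ∀ n, (∃ z : ℤ, cfNum ω n = z) ∧ (∃ Z : ℕ, cfDen ω n = Z) := by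
  have step : ∀ n : ℕ, ∃ b : ℤ, 1 ≤ b ∧
      cfNum ω (n+2) = b * cfNum ω (n+1) + cfNum ω n ∧
      cfDen ω (n+2) = b * cfDen ω (n+1) + cfDen ω n := by
    intro n
    obtain ⟨gp, hgp⟩ : ∃ gp, (GenContFract.of ω).s.get? (n+1) = some gp :=
      Option.ne_none_iff_exists'.mp (notTerm hω (n+1))
    have ha : gp.a = 1 := GenContFract.of_partNum_eq_one (GenContFract.partNum_eq_s_a hgp)
    have hb1 : (1:ℝ) ≤ gp.b :=
      GenContFract.of_one_le_get?_partDen (GenContFract.partDen_eq_s_b hgp)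
    obtain ⟨b, hb⟩ : ∃ b : ℤ, gp.b = (b:ℝ) :=
      GenContFract.exists_int_eq_of_partDen (GenContFract.partDen_eq_s_b hgp)
    refine ⟨b, by exact_mod_cast hb ▸ hb1, ?_, ?_⟩
    · have := GenContFract.nums_recurrence hgp rfl rfl
      simpa [cfNum, ha, hb] using this
    · have := GenContFract.dens_recurrence hgp rfl rfl
      simpa [cfDen, ha, hb] using this
  have key : ∀ n, ((∃ z : ℤ, cfNum ω n = z) ∧ (∃ Z : ℕ, cfDen ω n = Z)) ∧
      ((∃ z : ℤ, cfNum ω (n+1) = z) ∧ (∃ Z : ℕ, cfDen ω (n+1) = Z)) := by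
    intro n
    induction n with
    | zero =>
      have h0n : cfNum ω 0 = (⌊ω⌋ : ℝ) := by
        simp [cfNum, GenContFract.zeroth_num_eq_h, GenContFract.of_h_eq_floor]
      have h0d : cfDen ω 0 = ((1:ℕ):ℝ) := by
        simp [cfDen]
      obtain ⟨gp, hgp⟩ : ∃ gp, (GenContFract.of ω).s.get? 0 = some gp :=
        Option.ne_none_iff_exists'.mp (notTerm hω 0)
      have ha : gp.a = 1 := GenContFract.of_partNum_eq_one (GenContFract.partNum_eq_s_a hgp)
      have hb1 : (1:ℝ) ≤ gp.b :=
        GenContFract.of_one_le_get?_partDen (GenContFract.partDen_eq_s_b hgp)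
      obtain ⟨b, hb⟩ : ∃ b : ℤ, gp.b = (b:ℝ) :=
        GenContFract.exists_int_eq_of_partDen (GenContFract.partDen_eq_s_b hgp)
      have hbge : 1 ≤ b := by exact_mod_cast hb ▸ hb1
      have h1n : cfNum ω 1 = ((b * ⌊ω⌋ + 1 : ℤ) : ℝ) := by
        have := GenContFract.first_num_eq hgp
        simp only [cfNum, this, ha, hb, GenContFract.of_h_eq_floor]
        push_cast; ring
      have h1d : cfDen ω 1 = ((b.toNat : ℕ) : ℝ) := by
        have := GenContFract.first_den_eq hgp
        simp only [cfDen, this, hb]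
        exact_mod_cast (Int.toNat_of_nonneg (by omega : (0:ℤ) ≤ b)).symm
      exact ⟨⟨⟨⌊ω⌋, h0n⟩, ⟨1, h0d⟩⟩, ⟨⟨_, h1n⟩, ⟨_, h1d⟩⟩⟩
    | succ n ih =>
      obtain ⟨⟨⟨z0, hz0⟩, ⟨Z0, hZ0⟩⟩, ⟨⟨z1, hz1⟩, ⟨Z1, hZ1⟩⟩⟩ := ih
      obtain ⟨b, hbge, hnum, hden⟩ := step n
      refine ⟨⟨⟨z1, hz1⟩, ⟨Z1, hZ1⟩⟩, ⟨b * z1 + z0, ?_⟩, ⟨b.toNat * Z1 + Z0, ?_⟩⟩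
      · rw [hnum, hz0, hz1]; push_cast; ring
      · rw [hden, hZ0, hZ1]
        have : ((b.toNat : ℕ) : ℝ) = (b : ℝ) := by
          exact_mod_cast Int.toNat_of_nonneg (by omega : (0:ℤ) ≤ b)
        push_cast
        rw [this]
  exact fun n => (key n).1

lemma badly_approx {ω M : ℝ} (hω : Irrational ω) (hM : 1 ≤ M)
    (hbt : ∀ k : ℕ, cfDen ω (k + 1) ≤ M * cfDen ω k) :
    ∀ k : ℕ, 1 ≤ k → ∀ p : ℤ, 1 / (8 * M * k) ≤ |(k:ℝ) * ω - p| := by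
  intro k hk p
  have hkR : (1:ℝ) ≤ (k:ℝ) := by exact_mod_cast hk
  have hM0 : (0:ℝ) < M := by linarith
  obtain ⟨j, hj1, hj2⟩ := exists_crossing hω (R := 2*(k:ℝ)) (by linarith)
  have hq0 : (0:ℝ) < cfDen ω j := lt_of_lt_of_le one_pos (one_le_cfDen hω j)
  have hq10 : (0:ℝ) < cfDen ω (j+1) := lt_of_lt_of_le one_pos (one_le_cfDen hω (j+1))
  obtain ⟨⟨Pj, hPj⟩, ⟨Qj, hQj⟩⟩ := intCoeffs hω j
  by_cases hcase : (p:ℝ) * cfDen ω j = (k:ℝ) * cfNum ω j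
  · -- p/k = pⱼ/qⱼ
    have heq : (k:ℝ)*ω - p = ((k:ℝ) / cfDen ω j) * (cfDen ω j * ω - cfNum ω j) := by
      field_simp
      linear_combination -hcase
    have hlow := approx_low hω j
    have hqj1 : cfDen ω (j+1) ≤ M * (2*k) := by
      calc cfDen ω (j+1) ≤ M * cfDen ω j := hbt j
        _ ≤ M * (2*k) := by nlinarith
    have hlow2 : 1/(4*M*k) ≤ |cfDen ω j * ω - cfNum ω j| := by
      refine le_trans ?_ hlow
      have : (2 * cfDen ω (j+1)) ≤ 4*M*k := by nlinarith
      exact one_div_le_one_div_of_le (by positivity) this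
    have hres : ((k:ℝ) / cfDen ω j) * (1/(4*M*k)) ≤ |(k:ℝ)*ω - p| := by
      rw [heq, abs_mul, abs_of_pos (by positivity : (0:ℝ) < (k:ℝ)/cfDen ω j)]
      exact mul_le_mul_of_nonneg_left hlow2 (by positivity)
    refine le_trans ?_ hres
    have hhalf : (1:ℝ)/2 ≤ (k:ℝ)/cfDen ω j := by
      rw [div_le_div_iff₀ (by norm_num) hq0]
      linarith
    calc 1/(8*M*(k:ℝ)) = (1/2) * (1/(4*M*k)) := by field_simp; ring
      _ ≤ ((k:ℝ)/cfDen ω j) * (1/(4*M*k)) := by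
          exact mul_le_mul_of_nonneg_right hhalf (by positivity)
  · -- p/k ≠ pⱼ/qⱼ : integer gap at least 1
    have hint : (k:ℝ)*cfNum ω j - (p:ℝ)*cfDen ω j = ((k*Pj - p*Qj : ℤ):ℝ) := by
      rw [hPj, hQj]; push_cast; ring
    have hz : (k*Pj - p*Qj : ℤ) ≠ 0 := by
      intro h0
      rw [h0] at hint
      simp at hint
      exact hcase (by linarith)
    have hone : (1:ℝ) ≤ |(k:ℝ)*cfNum ω j - (p:ℝ)*cfDen ω j| := by
      rw [hint]
      exact_mod_cast Int.one_le_abs hz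
    have hup := approx_up hω j
    have hksmall : (k:ℝ) * |cfDen ω j * ω - cfNum ω j| ≤ 1/2 := by
      calc (k:ℝ) * |cfDen ω j * ω - cfNum ω j| ≤ (k:ℝ) * (1/cfDen ω (j+1)) := by
            exact mul_le_mul_of_nonneg_left hup (by positivity)
        _ ≤ 1/2 := by
            rw [mul_one_div, div_le_div_iff₀ hq10 (by norm_num)]
            linarith
    have hsplit : |(k:ℝ)*cfNum ω j - (p:ℝ)*cfDen ω j|
        ≤ (k:ℝ) * |cfDen ω j * ω - cfNum ω j| + cfDen ω j * |(k:ℝ)*ω - p| := by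
      have hid : (k:ℝ)*cfNum ω j - (p:ℝ)*cfDen ω j
          = -((k:ℝ) * (cfDen ω j * ω - cfNum ω j)) + cfDen ω j * ((k:ℝ)*ω - p) := by ring
      rw [hid]
      refine (abs_add_le _ _).trans ?_
      rw [abs_neg, abs_mul, abs_mul, abs_of_pos (by positivity : (0:ℝ) < (k:ℝ)),
        abs_of_pos hq0]
    have hmain : (1:ℝ)/2 ≤ cfDen ω j * |(k:ℝ)*ω - p| := by linarith
    have habs : 1/(2 * cfDen ω j) ≤ |(k:ℝ)*ω - p| := by
      rw [div_le_iff₀ (by positivity)]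
      calc (1:ℝ) ≤ cfDen ω j * |(k:ℝ)*ω - p| * 2 := by linarith
        _ = |(k:ℝ)*ω - p| * (2 * cfDen ω j) := by ring
    refine le_trans ?_ habs
    apply one_div_le_one_div_of_le (by positivity)
    nlinarith

lemma hitting {ω M L : ℝ} (hω : Irrational ω) (hM : 1 ≤ M)
    (hbt : ∀ k : ℕ, cfDen ω (k + 1) ≤ M * cfDen ω k)
    (hL : 0 < L) (hL2 : L ≤ 1/100) (jl : ℝ) :
    ∃ Q : ℕ, 1 ≤ Q ∧ (Q:ℝ) ≤ 30*M/L ∧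
      ∀ x : ℝ, ∃ n : ℕ, 1 ≤ n ∧ n ≤ Q ∧
        ∃ m : ℤ, x + (n:ℝ)*ω - (m:ℝ) ∈ Set.Icc jl (jl + L/10) := by
  have hM0 : (0:ℝ) < M := by linarith
  have hR1 : (1:ℝ) ≤ 30/L := by
    rw [le_div_iff₀ hL]; linarith
  obtain ⟨j, hj1, hj2⟩ := exists_crossing hω hR1
  obtain ⟨⟨Pj, hPj⟩, ⟨Qj, hQj⟩⟩ := intCoeffs hω j
  obtain ⟨⟨P, hP⟩, ⟨Q, hQ⟩⟩ := intCoeffs hω (j+1)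
  have hQ1R : (1:ℝ) ≤ (Q:ℝ) := hQ ▸ one_le_cfDen hω (j+1)
  have hQ1 : 1 ≤ Q := by exact_mod_cast hQ1R
  have hQpos : (0:ℝ) < (Q:ℝ) := by linarith
  have hQgt : 30/L < (Q:ℝ) := hQ ▸ hj2
  refine ⟨Q, hQ1, ?_, ?_⟩
  · rw [← hQ]
    calc cfDen ω (j+1) ≤ M * cfDen ω j := hbt j
      _ ≤ M * (30/L) := by nlinarith
      _ = 30*M/L := by ring
  -- the step size d
  set d : ℝ := cfDen ω (j+1) * ω - cfNum ω (j+1) with hd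
  have hdabs : |d| ≤ 1/(Q:ℝ) := by
    refine (approx_up hω (j+1)).trans ?_
    rw [← hQ]
    exact one_div_le_one_div_of_le (by linarith [one_le_cfDen hω (j+1)])
      (cfDen_mono ω (Nat.le_succ (j+1)))
  -- Bezout from the determinant identity
  set e : ℤ := (-1)^(j+1) with he
  have hBez : (Pj * Q - (Qj:ℤ) * P : ℤ) = e := by
    have hdet := cf_det hω j
    rw [hPj, hQj, hP, hQ] at hdet
    have : ((Pj * Q - (Qj:ℤ) * P : ℤ) : ℝ) = ((e:ℤ):ℝ) := by push_cast [he]; push_cast at hdet; linarith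
    exact_mod_cast this
  have he2 : e * e = 1 := by rw [he, ← mul_pow]; norm_num
  set u : ℤ := -e * Qj with hu
  have hinv : u * P - 1 = (Q:ℤ) * (-e * Pj) := by linear_combination e * hBez + he2
  intro x
  -- choose the lattice point
  set i : ℤ := ⌈(jl + 1/(Q:ℝ) - x) * Q⌉ with hi
  have hi1 : jl + 1/(Q:ℝ) ≤ x + (i:ℝ)/Q := by
    have h := Int.le_ceil ((jl + 1/(Q:ℝ) - x) * Q)
    rw [← hi] at h
    have hdd : jl + 1/(Q:ℝ) - x ≤ (i:ℝ)/Q := by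
      rw [le_div_iff₀ hQpos]; linarith
    linarith
  have hi2 : x + (i:ℝ)/Q ≤ jl + 2/(Q:ℝ) := by
    have h := Int.ceil_lt_add_one ((jl + 1/(Q:ℝ) - x) * Q)
    rw [← hi] at h
    have hfe : (jl + 2/(Q:ℝ) - x) * Q = (jl + 1/(Q:ℝ) - x) * Q + 1 := by
      field_simp; ring
    have hdd : (i:ℝ)/Q ≤ jl + 2/(Q:ℝ) - x := by
      rw [div_le_iff₀ hQpos]; linarith
    linarith
  -- choose n via modular inverse
  set n₀ : ℤ := (i * u) % (Q:ℤ) with hn₀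
  have hQZ : (0:ℤ) < (Q:ℤ) := by exact_mod_cast hQ1
  have hn₀0 : 0 ≤ n₀ := Int.emod_nonneg _ hQZ.ne'
  have hn₀Q : n₀ < (Q:ℤ) := Int.emod_lt_of_pos _ hQZ
  set nZ : ℤ := if n₀ = 0 then (Q:ℤ) else n₀ with hnZ
  have hnZ1 : 1 ≤ nZ := by
    rw [hnZ]; split
    · exact hQZ
    · omega
  have hnZQ : nZ ≤ (Q:ℤ) := by
    rw [hnZ]; split
    · exact le_refl _
    · omega
  have hmod : (Q:ℤ) ∣ nZ - i * u := by
    have h1 : (Q:ℤ) ∣ n₀ - i * u := by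
      rw [hn₀, Int.emod_def]
      exact ⟨-(i * u / Q), by ring⟩
    rw [hnZ]; split
    · rename_i h0
      obtain ⟨t, ht⟩ := h1
      exact ⟨t + 1, by rw [h0] at ht; linarith [ht]⟩
    · exact h1
  have hdvd : ∃ t : ℤ, nZ * P - i = (Q:ℤ) * t := by
    obtain ⟨t1, ht1⟩ := hmod
    refine ⟨t1 * P + i * (-e * Pj), ?_⟩
    have h2 : u * P - 1 = (Q:ℤ) * (-e * Pj) := hinv
    have h3 : nZ * P - i = (nZ - i*u) * P + i * (u * P - 1) := by ring
    rw [h3, ht1, h2]; ring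
  obtain ⟨t, ht⟩ := hdvd
  set n : ℕ := nZ.toNat with hnat
  have hnZn : (n:ℤ) = nZ := Int.toNat_of_nonneg (by omega)
  refine ⟨n, by omega, by omega, t, ?_⟩
  -- the key identity : x + n ω - t = (x + i/Q) + (n/Q) * d
  have hωeq : ω = ((P:ℝ) + d) / Q := by
    have hnum : ((P:ℝ) + d) = (Q:ℝ) * ω := by rw [hd, ← hQ, ← hP]; ring
    rw [hnum, mul_comm, mul_div_assoc, div_self (ne_of_gt hQpos), mul_one]
  have hnP : (n:ℝ) * (P:ℝ) = (i:ℝ) + (t:ℝ) * Q := by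
    have hZ : nZ * P = i + (Q:ℤ) * t := by linarith
    have hnn : ((n:ℕ):ℝ) = ((nZ:ℤ):ℝ) := by exact_mod_cast hnZn
    have hc := congrArg (fun z : ℤ => (z:ℝ)) hZ
    push_cast at hc
    rw [hnn]
    linarith
  have hkey : x + (n:ℝ)*ω - (t:ℝ) = (x + (i:ℝ)/Q) + ((n:ℝ)/Q) * d := by
    rw [hωeq]
    field_simp
    linear_combination hnP
  -- bounds
  have hnQR : (n:ℝ) ≤ (Q:ℝ) := by exact_mod_cast (by omega : (n:ℤ) ≤ (Q:ℤ))
  have hnonneg : (0:ℝ) ≤ (n:ℝ) := Nat.cast_nonneg n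
  have hpert : |((n:ℝ)/Q) * d| ≤ 1/(Q:ℝ) := by
    rw [abs_mul, abs_of_nonneg (by positivity : (0:ℝ) ≤ (n:ℝ)/Q)]
    calc ((n:ℝ)/Q) * |d| ≤ 1 * |d| := by
          apply mul_le_mul_of_nonneg_right _ (abs_nonneg d)
          rw [div_le_one hQpos]; exact hnQR
      _ = |d| := one_mul _
      _ ≤ 1/(Q:ℝ) := hdabs
  have h3Q : 3/(Q:ℝ) ≤ L/10 := by
    have h30 : (0:ℝ) < 30/L := by positivity
    rw [div_le_div_iff₀ hQpos (by norm_num : (0:ℝ) < 10)]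
    have : 30 < L * Q := by
      have := (div_lt_iff₀ hL).mp hQgt
      linarith [this]
    linarith
  have habs := abs_le.mp hpert
  constructor
  · rw [hkey]; linarith [habs.1]
  · rw [hkey]
    have : x + (i:ℝ)/Q + ((n:ℝ)/Q) * d ≤ jl + 2/(Q:ℝ) + 1/(Q:ℝ) := by linarith [habs.2]
    refine this.trans ?_
    have : (2:ℝ)/Q + 1/Q = 3/Q := by ring
    linarith [h3Q]

/-- First return time (under x ↦ x + ω on ℝ/ℤ) of x to the mod-1 set represented by J;
`sInf` of the empty set is the junk value 0. -/
noncomputable def firstReturn (ω : ℝ) (J : Set ℝ) (x : ℝ) : ℕ :=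
  sInf {n : ℕ | 1 ≤ n ∧ ∃ m : ℤ, x + n * ω - m ∈ J}

/-- Minimum over x ∈ J of the first return time of x to J. -/
noncomputable def minReturn (ω : ℝ) (J : Set ℝ) : ℕ := sInf (firstReturn ω J '' J)

/-- Maximum over x ∈ J of the first return time of x to J. -/
noncomputable def maxReturn (ω : ℝ) (J : Set ℝ) : ℕ := sSup (firstReturn ω J '' J)

theorem return_time_ratio_bounded
    (ω : ℝ) (hω : Irrational ω)
    (M : ℝ) (hM : 1 ≤ M) (hbt : ∀ k : ℕ, cfDen ω (k + 1) ≤ M * cfDen ω k) :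
    ∃ k₁ : ℕ, ∀ c L : ℝ, 0 < L → L ≤ 1 / 100 →
      -- I = I₁ ∪ I₂ with I₁ = [c, c+L], I₂ = I₁ + 1/2, and
      -- (1/10)I₁ the concentric subinterval of I₁ of one tenth its length
      M⁻¹ ^ k₁ ≤
        (minReturn ω (Set.Icc c (c + L) ∪ Set.Icc (c + 1/2) (c + 1/2 + L)) : ℝ) /
          (maxReturn ω (Set.Icc (c + L/2 - L/20) (c + L/2 + L/20)) : ℝ) ∧
      (minReturn ω (Set.Icc c (c + L) ∪ Set.Icc (c + 1/2) (c + 1/2 + L)) : ℝ) /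
          (maxReturn ω (Set.Icc (c + L/2 - L/20) (c + L/2 + L/20)) : ℝ) ≤ 1 := by
  rcases eq_or_lt_of_le hM with hM1 | hM1
  · -- M = 1 is impossible for an irrational number
    exfalso
    have h2 := hbt 1
    have hadd := cfDen_add2 hω 0
    have h0 : cfDen ω 0 = 1 := GenContFract.zeroth_den_eq_one
    rw [← hM1, one_mul] at h2
    rw [h0] at hadd
    norm_num at hadd
    linarith
  obtain ⟨k₁, hk₁⟩ := pow_unbounded_of_one_lt (960 * M ^ 2) hM1
  have hM0 : (0:ℝ) < M := by linarith
  refine ⟨k₁, ?_⟩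
  intro c L hL hL100
  obtain ⟨Q, hQ1, hQle, hhit⟩ := hitting hω hM hbt hL hL100 (c + L/2 - L/20)
  have hJrw : c + L/2 - L/20 + L/10 = c + L/2 + L/20 := by ring
  rw [hJrw] at hhit
  set J : Set ℝ := Set.Icc (c + L/2 - L/20) (c + L/2 + L/20) with hJdef
  set A : Set ℝ := Set.Icc c (c + L) ∪ Set.Icc (c + 1/2) (c + 1/2 + L) with hAdef
  have hJA : J ⊆ A := by
    intro y hy
    rw [hJdef, Set.mem_Icc] at hy
    left
    rw [Set.mem_Icc]
    constructor <;> linarith [hy.1, hy.2]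
  -- return-time sets
  have hRSJ : ∀ x : ℝ, ∃ n : ℕ, n ∈ {n : ℕ | 1 ≤ n ∧ ∃ m : ℤ, x + n * ω - m ∈ J} ∧ n ≤ Q := by
    intro x
    obtain ⟨n, hn1, hnQ, m, hm⟩ := hhit x
    exact ⟨n, ⟨hn1, m, hm⟩, hnQ⟩
  have hfrJ_le : ∀ x : ℝ, firstReturn ω J x ≤ Q := by
    intro x
    obtain ⟨n, hn, hnQ⟩ := hRSJ x
    exact le_trans (Nat.sInf_le hn) hnQ
  have hfrJ_mem : ∀ x : ℝ, firstReturn ω J x ∈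
      {n : ℕ | 1 ≤ n ∧ ∃ m : ℤ, x + n * ω - m ∈ J} := by
    intro x
    obtain ⟨n, hn, _⟩ := hRSJ x
    exact Nat.sInf_mem ⟨n, hn⟩
  have hfrA_mem : ∀ x : ℝ, firstReturn ω A x ∈
      {n : ℕ | 1 ≤ n ∧ ∃ m : ℤ, x + n * ω - m ∈ A} := by
    intro x
    obtain ⟨n, hn, _⟩ := hRSJ x
    exact Nat.sInf_mem ⟨n, ⟨hn.1, hn.2.imp fun m hm => hJA hm⟩⟩
  -- base point
  set x₀ : ℝ := c + L/2 with hx₀def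
  have hx₀J : x₀ ∈ J := by
    rw [hJdef, Set.mem_Icc]; constructor <;> linarith
  have hx₀A : x₀ ∈ A := hJA hx₀J
  -- maxReturn J facts
  have himJne : (firstReturn ω J '' J).Nonempty := ⟨firstReturn ω J x₀, x₀, hx₀J, rfl⟩
  have himJbdd : ∀ b ∈ firstReturn ω J '' J, b ≤ Q := by
    rintro b ⟨x, _, rfl⟩; exact hfrJ_le x
  have hmax_le : maxReturn ω J ≤ Q := csSup_le himJne himJbdd
  have hmax_ge : firstReturn ω J x₀ ≤ maxReturn ω J :=
    le_csSup ⟨Q, himJbdd⟩ ⟨x₀, hx₀J, rfl⟩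
  have hmax_pos : 1 ≤ maxReturn ω J := le_trans (hfrJ_mem x₀).1 hmax_ge
  -- minReturn A facts
  have hminA_le : minReturn ω A ≤ maxReturn ω J := by
    refine le_trans (Nat.sInf_le ⟨x₀, hx₀A, rfl⟩) (le_trans ?_ hmax_ge)
    exact Nat.sInf_le ⟨(hfrJ_mem x₀).1, (hfrJ_mem x₀).2.imp fun m hm => hJA hm⟩
  have himAne : (firstReturn ω A '' A).Nonempty := ⟨firstReturn ω A x₀, x₀, hx₀A, rfl⟩
  obtain ⟨x, hxA, hxmin⟩ : ∃ x ∈ A, firstReturn ω A x = minReturn ω A :=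
    Nat.sInf_mem himAne
  have hmin_mem := hfrA_mem x
  rw [hxmin] at hmin_mem
  obtain ⟨hmin1, m, hm⟩ := hmin_mem
  set nmin : ℕ := minReturn ω A with hnmin
  -- lower bound for nmin
  have hmin_lb : 1/(32*M*L) ≤ (nmin : ℝ) := by
    have hr : ∃ r : ℤ, |(2*(nmin:ℝ)) * ω - r| ≤ 2*L := by
      rw [hAdef] at hxA hm
      rcases hxA with hx1 | hx2 <;> rcases hm with hy1 | hy2 <;>
        rw [Set.mem_Icc] at * <;>
        [exact ⟨2*m, by push_cast; rw [abs_le]; constructor <;> linarith [hx1.1, hx1.2, hy1.1, hy1.2]⟩;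
         exact ⟨2*m+1, by push_cast; rw [abs_le]; constructor <;> linarith [hx1.1, hx1.2, hy2.1, hy2.2]⟩;
         exact ⟨2*m-1, by push_cast; rw [abs_le]; constructor <;> linarith [hx2.1, hx2.2, hy1.1, hy1.2]⟩;
         exact ⟨2*m, by push_cast; rw [abs_le]; constructor <;> linarith [hx2.1, hx2.2, hy2.1, hy2.2]⟩]
    obtain ⟨r, hr⟩ := hr
    have hba := badly_approx hω hM hbt (2*nmin) (by omega) r
    have hcast : ((2*nmin : ℕ) : ℝ) = 2*(nmin:ℝ) := by push_cast; ring
    rw [hcast] at hba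
    have hchain : 1/(8*M*(2*(nmin:ℝ))) ≤ 2*L := le_trans hba hr
    have hnpos : (0:ℝ) < (nmin:ℝ) := by exact_mod_cast hmin1
    rw [div_le_iff₀ (by positivity)] at hchain
    rw [div_le_iff₀ (by positivity)]
    linarith
  -- assemble
  have hmn_cast : (nmin:ℝ) ≤ (maxReturn ω J : ℝ) := by exact_mod_cast hminA_le
  have hmx_pos : (0:ℝ) < (maxReturn ω J : ℝ) := by exact_mod_cast hmax_pos
  have hmx_ub : (maxReturn ω J : ℝ) ≤ 30*M/L := by
    refine le_trans ?_ hQle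
    exact_mod_cast hmax_le
  constructor
  · rw [le_div_iff₀ hmx_pos]
    have hMk : (M ^ k₁)⁻¹ ≤ (960 * M^2)⁻¹ := by
      apply inv_anti₀ (by positivity) hk₁.le
    have hpos960 : (0:ℝ) < 960 * M^2 := by positivity
    calc M⁻¹ ^ k₁ * (maxReturn ω J : ℝ)
        = (M ^ k₁)⁻¹ * (maxReturn ω J : ℝ) := by rw [inv_pow]
      _ ≤ (960 * M^2)⁻¹ * (30*M/L) := by
          apply mul_le_mul hMk (hmx_ub) hmx_pos.le (by positivity)
      _ = 1/(32*M*L) := by field_simp; ring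
      _ ≤ (nmin:ℝ) := hmin_lb
  · rw [div_le_one hmx_pos]
    exact hmn_cast
end

section
/- Let ω be irrational, T x = x + ω on ℝ/ℤ, and let A : ℝ → SL(2,ℝ) be continuous and 1-periodic. Let I ⊂ ℝ/ℤ be a finite union of nondegenerate closed intervals, and for x ∈ I let r(x) = min{ n ≥ 1 : T^n x ∈ I } be the first return time. If μ ≥ 1 and ‖A^{r(x)}(x)‖ ≤ μ^{r(x)} for every x ∈ I, then L(A) ≤ log μ, i.e. lim_{n→∞} (1/n)∫₀¹ log‖A^n(x)‖ dx ≤ log μ. -/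
/-
Every orbit of an irrational rotation enters `I` within some uniform time `N`: the translates
of the open set `int I` by the dense set of integer multiples of `ω` cover the compact circle, so
finitely many do. Hence return times are at most `N + 1`, and the orbit segment of length `n`
starting at `x` splits into an entry segment of length at most `N`, complete return blocks, each
growing by at most `μ` per step, and a last incomplete block of length at most `N + 1`. This gives
`‖A^n(x)‖ ≤ K μ^n` uniformly in `x`, so `L_n(A) ≤ log K / n + log μ`, while `L_n(A)` converges
because `n ↦ ∫ log ‖A^n‖` is subadditive (the rotation preserves Lebesgue measure).
-/

open Real MeasureTheory Filter

/-- Iterates of the quasi-periodic cocycle: A^n(x) = A(x+(n-1)ω)⋯A(x+ω)A(x). -/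
noncomputable def cocycle (ω : ℝ) (A : ℝ → Matrix (Fin 2) (Fin 2) ℝ) :
    ℕ → ℝ → Matrix (Fin 2) (Fin 2) ℝ
  | 0, _ => 1
  | n + 1, x => A (x + n * ω) * cocycle ω A n x

/-- Finite Lyapunov exponents L_n(A) = (1/n) ∫₀¹ log ‖A^n(x)‖ dx. -/
noncomputable def LEn (ω : ℝ) (A : ℝ → Matrix (Fin 2) (Fin 2) ℝ) (n : ℕ) : ℝ :=
  (1 / n) * ∫ x in (0:ℝ)..1, Real.log (opNorm (cocycle ω A n x))

lemma opNorm_nonneg (A : Matrix (Fin 2) (Fin 2) ℝ) : 0 ≤ opNorm A := norm_nonneg _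

lemma opNorm_one : opNorm 1 = 1 := by
  simp [opNorm]

lemma opNorm_mul_le (A B : Matrix (Fin 2) (Fin 2) ℝ) :
    opNorm (A * B) ≤ opNorm A * opNorm B := by
  simpa only [opNorm, map_mul] using norm_mul_le _ _

lemma continuous_opNorm : Continuous opNorm :=
  continuous_norm.comp <| LinearMap.continuous_of_finiteDimensional
    (Matrix.toEuclideanCLM (n := Fin 2) (𝕜 := ℝ)).toAlgEquiv.toLinearMap

lemma sq_add_sq_le_opNorm_sq (A : Matrix (Fin 2) (Fin 2) ℝ) (j : Fin 2) :
    A 0 j ^ 2 + A 1 j ^ 2 ≤ opNorm A ^ 2 := by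
  have h := (Matrix.toEuclideanCLM (𝕜 := ℝ) A).le_opNorm (EuclideanSpace.single j 1)
  rw [PiLp.norm_single, norm_one, mul_one] at h
  have hcol : ‖Matrix.toEuclideanCLM (𝕜 := ℝ) A (EuclideanSpace.single j 1)‖ ^ 2
      = A 0 j ^ 2 + A 1 j ^ 2 := by
    simp [EuclideanSpace.norm_sq_eq, Fin.sum_univ_two]
  rw [← hcol]
  exact pow_le_pow_left₀ (norm_nonneg _) h 2

lemma one_le_opNorm_of_det_eq_one {A : Matrix (Fin 2) (Fin 2) ℝ} (h : A.det = 1) :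
    1 ≤ opNorm A := by
  rw [Matrix.det_fin_two] at h
  -- Lagrange's identity: `(ad - bc)² + (ab + cd)² = (a² + c²)(b² + d²)`
  have hdet : 1 ≤ (A 0 0 ^ 2 + A 1 0 ^ 2) * (A 0 1 ^ 2 + A 1 1 ^ 2) := by
    nlinarith [sq_nonneg (A 0 0 * A 0 1 + A 1 0 * A 1 1)]
  have h4 : 1 ≤ opNorm A ^ 4 :=
    calc (1 : ℝ) ≤ _ := hdet
      _ ≤ opNorm A ^ 2 * opNorm A ^ 2 :=
        mul_le_mul (sq_add_sq_le_opNorm_sq A 0) (sq_add_sq_le_opNorm_sq A 1)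
          (by positivity) (by positivity)
      _ = opNorm A ^ 4 := by ring
  exact (one_le_pow_iff_of_nonneg (opNorm_nonneg A) (by norm_num)).1 h4

section Cocycle

variable {ω : ℝ} {A : ℝ → Matrix (Fin 2) (Fin 2) ℝ}

lemma cocycle_zero (x : ℝ) : cocycle ω A 0 x = 1 := rfl

lemma cocycle_succ (n : ℕ) (x : ℝ) :
    cocycle ω A (n + 1) x = A (x + n * ω) * cocycle ω A n x :=
  rfl

lemma cocycle_add (m n : ℕ) (x : ℝ) :
    cocycle ω A (m + n) x = cocycle ω A m (x + n * ω) * cocycle ω A n x := by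
  induction m with
  | zero => rw [zero_add, cocycle_zero, one_mul]
  | succ m ih =>
    rw [Nat.add_right_comm, cocycle_succ, ih, cocycle_succ, mul_assoc]
    push_cast
    ring_nf

lemma det_cocycle (hAdet : ∀ x, (A x).det = 1) (n : ℕ) (x : ℝ) :
    (cocycle ω A n x).det = 1 := by
  induction n with
  | zero => exact Matrix.det_one
  | succ n ih => rw [cocycle_succ, Matrix.det_mul, hAdet, ih, one_mul]

lemma one_le_opNorm_cocycle (hAdet : ∀ x, (A x).det = 1) (n : ℕ) (x : ℝ) :
    1 ≤ opNorm (cocycle ω A n x) :=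
  one_le_opNorm_of_det_eq_one (det_cocycle hAdet n x)

lemma opNorm_cocycle_pos (hAdet : ∀ x, (A x).det = 1) (n : ℕ) (x : ℝ) :
    0 < opNorm (cocycle ω A n x) :=
  zero_lt_one.trans_le (one_le_opNorm_cocycle hAdet n x)

lemma cocycle_add_one (hAper : ∀ x, A (x + 1) = A x) (n : ℕ) (x : ℝ) :
    cocycle ω A n (x + 1) = cocycle ω A n x := by
  induction n with
  | zero => rfl
  | succ n ih => rw [cocycle_succ, cocycle_succ, ih, add_right_comm, hAper]

lemma continuous_cocycle (hAcont : Continuous A) (n : ℕ) : Continuous (cocycle ω A n) := by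
  induction n with
  | zero => exact continuous_const
  | succ n ih => exact (hAcont.comp (continuous_add_const _)).mul ih

lemma opNorm_cocycle_add_le (m n : ℕ) (x : ℝ) :
    opNorm (cocycle ω A (m + n) x) ≤
      opNorm (cocycle ω A m (x + n * ω)) * opNorm (cocycle ω A n x) := by
  rw [cocycle_add]
  exact opNorm_mul_le _ _

lemma opNorm_cocycle_le_pow {C : ℝ} (hC : ∀ x, opNorm (A x) ≤ C) (n : ℕ) (x : ℝ) :
    opNorm (cocycle ω A n x) ≤ C ^ n := by
  induction n with
  | zero => rw [cocycle_zero, opNorm_one, pow_zero]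
  | succ n ih =>
    calc opNorm (cocycle ω A (n + 1) x) ≤ opNorm (A (x + n * ω)) * opNorm (cocycle ω A n x) :=
          opNorm_mul_le _ _
      _ ≤ C * C ^ n := mul_le_mul (hC _) ih (opNorm_nonneg _) ((opNorm_nonneg _).trans (hC x))
      _ = C ^ (n + 1) := (pow_succ' C n).symm

variable {C μ : ℝ} (hC1 : 1 ≤ C) (hC : ∀ x, opNorm (A x) ≤ C) (hμ : 1 ≤ μ)
include hC1 hC hμ

/-- Cut the orbit segment into return blocks; only the last, incomplete one, of length `< R`,
escapes the bound `μ` per step. -/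
lemma opNorm_cocycle_le_of_returns {P : ℝ → Prop} {r : ℝ → ℕ} {R : ℕ}
    (hret : ∀ x, P x → 1 ≤ r x ∧ r x ≤ R ∧ P (x + r x * ω))
    (hblock : ∀ x, P x → opNorm (cocycle ω A (r x) x) ≤ μ ^ r x) (n : ℕ) :
    ∀ x, P x → opNorm (cocycle ω A n x) ≤ C ^ R * μ ^ n := by
  induction n using Nat.strong_induction_on with
  | _ n ih =>
  intro x hx
  obtain ⟨hr1, hrR, hPr⟩ := hret x hx
  by_cases hn : n < r x
  · calc opNorm (cocycle ω A n x) ≤ C ^ n := opNorm_cocycle_le_pow hC n x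
      _ ≤ C ^ R := pow_le_pow_right₀ hC1 (by omega)
      _ ≤ C ^ R * μ ^ n := le_mul_of_one_le_right (by positivity) (one_le_pow₀ hμ)
  · obtain ⟨k, rfl⟩ := Nat.exists_eq_add_of_le' (not_lt.1 hn)
    calc opNorm (cocycle ω A (k + r x) x)
        ≤ opNorm (cocycle ω A k (x + r x * ω)) * opNorm (cocycle ω A (r x) x) :=
          opNorm_cocycle_add_le k (r x) x
      _ ≤ (C ^ R * μ ^ k) * μ ^ r x :=
          mul_le_mul (ih k (by omega) _ hPr) (hblock x hx) (opNorm_nonneg _) (by positivity)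
      _ = C ^ R * μ ^ (k + r x) := by rw [pow_add, mul_assoc]

lemma opNorm_cocycle_le_of_hitting {P : ℝ → Prop} {N : ℕ} {K : ℝ} (hK : 1 ≤ K)
    (hhit : ∀ x, ∃ j ≤ N, P (x + j * ω))
    (hP : ∀ n x, P x → opNorm (cocycle ω A n x) ≤ K * μ ^ n) (n : ℕ) (x : ℝ) :
    opNorm (cocycle ω A n x) ≤ C ^ N * K * μ ^ n := by
  obtain ⟨j, hjN, hj⟩ := hhit x
  have hK0 : 0 ≤ K := zero_le_one.trans hK
  by_cases hn : n ≤ j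
  · calc opNorm (cocycle ω A n x) ≤ C ^ n := opNorm_cocycle_le_pow hC n x
      _ ≤ C ^ N := pow_le_pow_right₀ hC1 (hn.trans hjN)
      _ ≤ C ^ N * (K * μ ^ n) :=
          le_mul_of_one_le_right (by positivity) (one_le_mul_of_one_le_of_one_le hK
            (one_le_pow₀ hμ))
      _ = C ^ N * K * μ ^ n := (mul_assoc _ _ _).symm
  · obtain ⟨k, rfl⟩ := Nat.exists_eq_add_of_le' (le_of_not_ge hn)
    calc opNorm (cocycle ω A (k + j) x)
        ≤ opNorm (cocycle ω A k (x + j * ω)) * opNorm (cocycle ω A j x) :=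
          opNorm_cocycle_add_le k j x
      _ ≤ (K * μ ^ k) * C ^ N :=
          mul_le_mul (hP k _ hj) ((opNorm_cocycle_le_pow hC j x).trans
            (pow_le_pow_right₀ hC1 hjN)) (opNorm_nonneg _) (by positivity)
      _ ≤ C ^ N * K * μ ^ (k + j) := by
          rw [pow_add, mul_comm, ← mul_assoc, ← mul_assoc]
          exact le_mul_of_one_le_right (by positivity) (one_le_pow₀ hμ)

end Cocycle

lemma exists_forall_opNorm_le {A : ℝ → Matrix (Fin 2) (Fin 2) ℝ} (hAcont : Continuous A)
    (hAper : ∀ x, A (x + 1) = A x) : ∃ C, ∀ x, opNorm (A x) ≤ C := by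
  have hper : Function.Periodic (fun x => opNorm (A x)) 1 := fun x => congrArg opNorm (hAper x)
  obtain ⟨C, hC⟩ :=
    (hper.isBounded_of_continuous one_ne_zero (continuous_opNorm.comp hAcont)).bddAbove
  exact ⟨C, fun x => hC ⟨x, rfl⟩⟩

lemma exists_uniform_hitting_time {ω : ℝ} (hω : Irrational ω) {I : Set ℝ}
    (hI : (interior I).Nonempty) :
    ∃ N : ℕ, ∀ x : ℝ, ∃ j ≤ N, ∃ m : ℤ, x + j * ω - m ∈ I := by
  let U : Set (AddCircle (1 : ℝ)) := (↑) '' interior I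
  have hUopen : IsOpen U := QuotientAddGroup.isOpenMap_coe _ isOpen_interior
  have hdense : DenseRange fun j : ℤ => j • (ω : AddCircle (1 : ℝ)) :=
    AddCircle.denseRange_zsmul_coe_iff.2 (by simpa using hω)
  have hcover (y : AddCircle (1 : ℝ)) : ∃ j : ℤ, y + j • (ω : AddCircle (1 : ℝ)) ∈ U := by
    obtain ⟨u, hu⟩ := hI
    exact hdense.exists_mem_open (hUopen.preimage (continuous_const_add y)) ⟨-y + u, by
      simpa only [Set.mem_preimage, add_neg_cancel_left] using Set.mem_image_of_mem _ hu⟩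
  obtain ⟨t, ht⟩ := isCompact_univ.elim_finite_subcover
    (fun j : ℤ => {y | y + j • (ω : AddCircle (1 : ℝ)) ∈ U})
    (fun j => hUopen.preimage (continuous_add_const _))
    (fun y _ => Set.mem_iUnion.2 (hcover y))
  -- a window of integer times `j ∈ [-M, M]` becomes one of natural times `M + j ∈ [0, 2M]`
  set M := t.sup Int.natAbs
  refine ⟨2 * M, fun x => ?_⟩
  obtain ⟨j, hjt, s, hs, hsx⟩ : ∃ j ∈ t, ∃ s ∈ interior I,
      (s : AddCircle (1 : ℝ)) = ↑(x + M * ω) + j • (ω : AddCircle (1 : ℝ)) := by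
    simpa [U] using ht (Set.mem_univ ((x + M * ω : ℝ) : AddCircle (1 : ℝ)))
  have hjM : j.natAbs ≤ M := Finset.le_sup (f := Int.natAbs) hjt
  have hcast : ((M + j).toNat : ℝ) = M + j := by
    exact_mod_cast Int.toNat_of_nonneg (by omega : 0 ≤ (M : ℤ) + j)
  rw [← AddCircle.coe_zsmul, ← AddCircle.coe_add, QuotientAddGroup.eq,
    AddSubgroup.mem_zmultiples_iff] at hsx
  obtain ⟨m, hm⟩ := hsx
  refine ⟨(M + j).toNat, by omega, m, ?_⟩
  convert interior_subset hs using 1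
  rw [zsmul_eq_mul, zsmul_eq_mul, mul_one] at hm
  rw [hcast]
  linarith

lemma firstReturn_spec {ω : ℝ} {I : Set ℝ} {N : ℕ}
    (hhit : ∀ x, ∃ j ≤ N, ∃ m : ℤ, x + j * ω - m ∈ I) (x : ℝ) :
    1 ≤ firstReturn ω I x ∧ firstReturn ω I x ≤ N + 1 ∧
      ∃ m : ℤ, x + firstReturn ω I x * ω - m ∈ I := by
  obtain ⟨j, hjN, m, hm⟩ := hhit (x + ω)
  have hmem : j + 1 ∈ {n : ℕ | 1 ≤ n ∧ ∃ m : ℤ, x + n * ω - m ∈ I} :=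
    ⟨Nat.le_add_left 1 j, m, by convert hm using 2; push_cast; ring⟩
  obtain ⟨hpos, hret⟩ := Nat.sInf_mem ⟨_, hmem⟩
  exact ⟨hpos, (Nat.sInf_le hmem).trans (by omega), hret⟩

section Lyapunov

variable {ω : ℝ} {A : ℝ → Matrix (Fin 2) (Fin 2) ℝ} (hAcont : Continuous A)
  (hAdet : ∀ x, (A x).det = 1)
include hAcont hAdet

lemma continuous_log_opNorm_cocycle (n : ℕ) :
    Continuous fun x => log (opNorm (cocycle ω A n x)) :=
  (continuous_opNorm.comp (continuous_cocycle hAcont n)).log fun x =>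
    (opNorm_cocycle_pos hAdet n x).ne'

lemma subadditive_integral_log_opNorm_cocycle (hAper : ∀ x, A (x + 1) = A x) :
    Subadditive fun n => ∫ x in (0 : ℝ)..1, log (opNorm (cocycle ω A n x)) := by
  intro m n
  set f := fun k x => log (opNorm (cocycle ω A k x))
  have hf := continuous_log_opNorm_cocycle (ω := ω) hAcont hAdet
  have hpos := opNorm_cocycle_pos (ω := ω) hAdet
  have hsplit (x : ℝ) : f (m + n) x ≤ f m (x + n * ω) + f n x := by
    rw [← log_mul (hpos m _).ne' (hpos n x).ne']
    exact log_le_log (hpos _ x) (opNorm_cocycle_add_le m n x)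
  -- the rotation preserves Lebesgue measure on the circle
  have hshift : ∫ x in (0 : ℝ)..1, f m (x + n * ω) = ∫ x in (0 : ℝ)..1, f m x := by
    have hper : Function.Periodic (f m) 1 := fun x => by simp only [f, cocycle_add_one hAper]
    rw [intervalIntegral.integral_comp_add_right, zero_add, add_comm,
      hper.intervalIntegral_add_eq (n * ω) 0, zero_add]
  have hshift_cont : Continuous fun x => f m (x + n * ω) := (hf m).comp (continuous_add_const _)
  calc ∫ x in (0 : ℝ)..1, f (m + n) x ≤ ∫ x in (0 : ℝ)..1, (f m (x + n * ω) + f n x) :=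
        intervalIntegral.integral_mono_on zero_le_one ((hf _).intervalIntegrable 0 1)
          ((hshift_cont.add (hf n)).intervalIntegrable 0 1) fun x _ => hsplit x
    _ = (∫ x in (0 : ℝ)..1, f m x) + ∫ x in (0 : ℝ)..1, f n x := by
        rw [intervalIntegral.integral_add (hshift_cont.intervalIntegrable 0 1)
          ((hf n).intervalIntegrable 0 1), hshift]

lemma tendsto_LEn (hAper : ∀ x, A (x + 1) = A x) :
    Tendsto (fun n => LEn ω A n) atTop
      (nhds (subadditive_integral_log_opNorm_cocycle (ω := ω) hAcont hAdet hAper).lim) := by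
  have hbdd : BddBelow (Set.range fun n : ℕ =>
      (∫ x in (0 : ℝ)..1, log (opNorm (cocycle ω A n x))) / n) := by
    refine ⟨0, ?_⟩
    rintro _ ⟨n, rfl⟩
    exact div_nonneg (intervalIntegral.integral_nonneg zero_le_one fun x _ =>
      log_nonneg (one_le_opNorm_cocycle hAdet n x)) n.cast_nonneg
  simpa only [LEn, one_div_mul_eq_div] using
    (subadditive_integral_log_opNorm_cocycle hAcont hAdet hAper).tendsto_lim hbdd

lemma LEn_le_of_opNorm_cocycle_le {K μ : ℝ} (hμ : 0 < μ)
    (hK : ∀ n x, opNorm (cocycle ω A n x) ≤ K * μ ^ n) {n : ℕ} (hn : n ≠ 0) :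
    LEn ω A n ≤ log K / n + log μ := by
  have hpos := opNorm_cocycle_pos (ω := ω) hAdet n
  have hK0 : 0 < K := by simpa using (opNorm_cocycle_pos (ω := ω) hAdet 0 0).trans_le (hK 0 0)
  have hpt (x : ℝ) : log (opNorm (cocycle ω A n x)) ≤ log K + n * log μ := by
    rw [← log_pow, ← log_mul hK0.ne' (by positivity)]
    exact log_le_log (hpos x) (hK n x)
  have hint : ∫ x in (0 : ℝ)..1, log (opNorm (cocycle ω A n x)) ≤ log K + n * log μ := by
    simpa using intervalIntegral.integral_mono_on (μ := volume) zero_le_one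
      ((continuous_log_opNorm_cocycle hAcont hAdet n).intervalIntegrable 0 1)
      intervalIntegrable_const fun x _ => hpt x
  have hn0 : (0 : ℝ) < n := by exact_mod_cast Nat.pos_of_ne_zero hn
  rw [LEn, one_div_mul_eq_div, div_le_iff₀ hn0, add_mul, div_mul_cancel₀ _ hn0.ne']
  linarith

end Lyapunov

theorem LE_upper_bound_from_return_blocks
    (ω : ℝ) (hω : Irrational ω)
    (A : ℝ → Matrix (Fin 2) (Fin 2) ℝ)
    (hAcont : Continuous A) (hAper : ∀ x, A (x + 1) = A x)
    (hAdet : ∀ x, (A x).det = 1)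
    (I : Set ℝ)
    (hI : ∃ S : Finset (ℝ × ℝ), S.Nonempty ∧ (∀ p ∈ S, p.1 < p.2) ∧
      I = ⋃ p ∈ S, Set.Icc p.1 p.2)
    (μ : ℝ) (hμ : 1 ≤ μ)
    (hblocks : ∀ x : ℝ, (∃ m : ℤ, (x - m : ℝ) ∈ I) →
      opNorm (cocycle ω A (firstReturn ω I x) x) ≤ μ ^ firstReturn ω I x) :
    ∃ L : ℝ, Tendsto (fun n => LEn ω A n) atTop (nhds L) ∧ L ≤ Real.log μ := by
  obtain ⟨S, ⟨p, hp⟩, hlt, hIS⟩ := hI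
  have hint : (interior I).Nonempty := by
    have hIoo := interior_mono (hIS ▸ Set.subset_biUnion_of_mem
      (u := fun p : ℝ × ℝ => Set.Icc p.1 p.2) hp)
    rw [interior_Icc] at hIoo
    exact (Set.nonempty_Ioo.2 (hlt p hp)).mono hIoo
  obtain ⟨N, hN⟩ := exists_uniform_hitting_time hω hint
  obtain ⟨C, hC⟩ := exists_forall_opNorm_le hAcont hAper
  have hC1 : 1 ≤ C := (one_le_opNorm_of_det_eq_one (hAdet 0)).trans (hC 0)
  have hbound : ∀ n x, opNorm (cocycle ω A n x) ≤ C ^ N * C ^ (N + 1) * μ ^ n :=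
    opNorm_cocycle_le_of_hitting (P := fun x => ∃ m : ℤ, x - m ∈ I) hC1 hC hμ
      (one_le_pow₀ hC1) hN <|
      opNorm_cocycle_le_of_returns hC1 hC hμ (fun x _ => firstReturn_spec hN x) hblocks
  have hLEn := tendsto_LEn (ω := ω) hAcont hAdet hAper
  have hlim := (tendsto_const_div_atTop_nhds_zero_nat (log (C ^ N * C ^ (N + 1)))).add_const
    (log μ)
  rw [zero_add] at hlim
  exact ⟨_, hLEn, le_of_tendsto_of_tendsto hLEn hlim <| eventually_atTop.2 ⟨1, fun n hn =>
    LEn_le_of_opNorm_cocycle_le hAcont hAdet (by linarith) hbound (by omega)⟩⟩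
end
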